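/- arXiv:2206.12457 — 7 statements merged into one kernel-verified Lean document; each statement's English description precedes it below -/
import Mathlib

section
/- Let $p>1$ and let $(c_k)_{k\ge 1}$ be a sequence of nonnegative reals. Then $\sum_{n=1}^\infty \left(\frac{1}{n}\sum_{k=1}^n c_k\right)^p \le \left(\frac{p}{p-1}\right)^p \sum_{k=1}^\infty c_k^p$. -/
open Finset

/-! Writing `A n` for the mean of `c 0, …, c n` and `q = p / (p - 1)`, Young's inequality turns
`c n = (n + 1) A n - n A (n - 1)` into `A n ^ p ≤ q c n A n ^ (p - 1) + (q - 1) (G n - G (n + 1))`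
with `G n = n A (n - 1) ^ p ≥ 0`. Summing, `∑ A ^ p ≤ q ∑ c A ^ (p - 1)`, and Hölder's inequality
bounds the right side by `q ‖c‖_p ‖A‖_p ^ (p - 1)`; dividing out gives the finite inequality,
which passes to the series. -/

noncomputable def cesaroMean (c : ℕ → ℝ) (n : ℕ) : ℝ :=
  (1 / ((n : ℝ) + 1)) * ∑ k ∈ range (n + 1), c k

lemma cesaroMean_nonneg {c : ℕ → ℝ} (hc : ∀ k, 0 ≤ c k) (n : ℕ) : 0 ≤ cesaroMean c n :=
  mul_nonneg (by positivity) (sum_nonneg fun k _ => hc k)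

lemma succ_mul_cesaroMean (c : ℕ → ℝ) (n : ℕ) :
    ((n : ℝ) + 1) * cesaroMean c n = ∑ k ∈ range (n + 1), c k := by
  rw [cesaroMean, ← mul_assoc, mul_one_div_cancel (by positivity), one_mul]

-- For `n = 0` the junk value `cesaroMean c (0 - 1)` is multiplied by `0`.
lemma eq_succ_mul_cesaroMean_sub (c : ℕ → ℝ) (n : ℕ) :
    c n = ((n : ℝ) + 1) * cesaroMean c n - n * cesaroMean c (n - 1) := by
  cases n with
  | zero => simp [cesaroMean]
  | succ m =>
    rw [succ_mul_cesaroMean, Nat.add_sub_cancel, Nat.cast_succ, succ_mul_cesaroMean,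
      sum_range_succ _ (m + 1)]
    ring

section

variable {p q : ℝ}

lemma Real.mul_rpow_sub_one_of_nonneg {a : ℝ} (ha : 0 ≤ a) (hp : p ≠ 0) :
    a * a ^ (p - 1) = a ^ p := by
  rw [← Real.rpow_one_add' ha (by simpa using hp), add_sub_cancel]

lemma Real.HolderConjugate.young_rpow_sub_one (hpq : p.HolderConjugate q) {a b : ℝ}
    (ha : 0 ≤ a) (hb : 0 ≤ b) : q * (b * a ^ (p - 1)) ≤ (q - 1) * b ^ p + a ^ p := by
  have young := Real.young_inequality_of_nonneg hb (Real.rpow_nonneg ha (p - 1)) hpq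
  rw [← Real.rpow_mul ha, hpq.sub_one_mul_conj] at young
  calc q * (b * a ^ (p - 1)) ≤ q * (b ^ p / p + a ^ p / q) := by gcongr; exact hpq.symm.nonneg
    _ = (q - 1) * b ^ p + a ^ p := by
      rw [← hpq.symm.div_conj_eq_sub_one]; field_simp [hpq.ne_zero, hpq.symm.ne_zero]

lemma hardy_step (hpq : p.HolderConjugate q) {x a b : ℝ} (hx : 0 ≤ x) (ha : 0 ≤ a)
    (hb : 0 ≤ b) :
    a ^ p ≤ q * (((x + 1) * a - x * b) * a ^ (p - 1))
      + (q - 1) * (x * b ^ p - (x + 1) * a ^ p) := by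
  have young := hpq.young_rpow_sub_one ha hb
  have hpow := Real.mul_rpow_sub_one_of_nonneg ha hpq.ne_zero
  linear_combination mul_le_mul_of_nonneg_left young hx - q * (x + 1) * hpow

lemma sum_rpow_cesaroMean_le_mul_sum (hpq : p.HolderConjugate q) {c : ℕ → ℝ}
    (hc : ∀ k, 0 ≤ c k) (N : ℕ) :
    ∑ n ∈ range N, cesaroMean c n ^ p ≤ q * ∑ n ∈ range N, c n * cesaroMean c n ^ (p - 1) := by
  set A := cesaroMean c
  set G : ℕ → ℝ := fun n => n * A (n - 1) ^ p
  have step (n : ℕ) : A n ^ p ≤ q * (c n * A n ^ (p - 1)) + (q - 1) * (G n - G (n + 1)) := by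
    have := hardy_step hpq n.cast_nonneg (cesaroMean_nonneg hc n)
      (cesaroMean_nonneg hc (n - 1))
    simpa [G, ← eq_succ_mul_cesaroMean_sub] using this
  have hG : 0 ≤ G N := mul_nonneg N.cast_nonneg (Real.rpow_nonneg (cesaroMean_nonneg hc _) p)
  calc ∑ n ∈ range N, A n ^ p
      ≤ ∑ n ∈ range N, (q * (c n * A n ^ (p - 1)) + (q - 1) * (G n - G (n + 1))) :=
        sum_le_sum fun n _ => step n
    _ = q * ∑ n ∈ range N, c n * A n ^ (p - 1) - (q - 1) * G N := by
        rw [sum_add_distrib, ← mul_sum, ← mul_sum, sum_range_sub']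
        simp only [G, Nat.cast_zero, zero_mul]
        ring
    _ ≤ q * ∑ n ∈ range N, c n * A n ^ (p - 1) :=
        sub_le_self _ (mul_nonneg hpq.symm.sub_one_pos.le hG)

lemma le_rpow_mul_of_le_mul_rpow (hpq : p.HolderConjugate q) {S C K : ℝ} (hS : 0 ≤ S)
    (hC : 0 ≤ C) (hK : 0 ≤ K) (h : S ≤ K * (C ^ (1 / p) * S ^ (1 / q))) : S ≤ K ^ p * C := by
  rcases hS.eq_or_lt with rfl | hS
  · positivity
  have hsplit : S ^ (1 / p) * S ^ (1 / q) = S := by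
    rw [← Real.rpow_add hS, one_div, one_div, hpq.inv_add_inv_eq_one, Real.rpow_one]
  have hroot : S ^ (1 / p) ≤ K * C ^ (1 / p) := by
    refine le_of_mul_le_mul_right ?_ (Real.rpow_pos_of_pos hS (1 / q))
    rw [hsplit, mul_assoc]
    exact h
  calc S = (S ^ (1 / p)) ^ p := by
        rw [← Real.rpow_mul hS.le, one_div_mul_cancel hpq.ne_zero, Real.rpow_one]
    _ ≤ (K * C ^ (1 / p)) ^ p := by gcongr; exact hpq.nonneg
    _ = K ^ p * C := by
        rw [Real.mul_rpow hK (by positivity), ← Real.rpow_mul hC, one_div_mul_cancel hpq.ne_zero,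
          Real.rpow_one]

theorem sum_rpow_cesaroMean_le (hpq : p.HolderConjugate q) {c : ℕ → ℝ} (hc : ∀ k, 0 ≤ c k)
    (N : ℕ) : ∑ n ∈ range N, cesaroMean c n ^ p ≤ q ^ p * ∑ n ∈ range N, c n ^ p := by
  have hA := cesaroMean_nonneg hc
  refine le_rpow_mul_of_le_mul_rpow hpq (sum_nonneg fun n _ => Real.rpow_nonneg (hA n) p)
    (sum_nonneg fun n _ => Real.rpow_nonneg (hc n) p) hpq.symm.nonneg ?_
  calc ∑ n ∈ range N, cesaroMean c n ^ p
      ≤ q * ∑ n ∈ range N, c n * cesaroMean c n ^ (p - 1) :=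
        sum_rpow_cesaroMean_le_mul_sum hpq hc N
    _ ≤ q * ((∑ n ∈ range N, c n ^ p) ^ (1 / p) *
          (∑ n ∈ range N, (cesaroMean c n ^ (p - 1)) ^ q) ^ (1 / q)) := by
        gcongr
        · exact hpq.symm.nonneg
        exact Real.inner_le_Lp_mul_Lq_of_nonneg (range N) hpq (fun n _ => hc n)
          (fun n _ => Real.rpow_nonneg (hA n) _)
    _ = q * ((∑ n ∈ range N, c n ^ p) ^ (1 / p) *
          (∑ n ∈ range N, cesaroMean c n ^ p) ^ (1 / q)) := by
        simp_rw [← Real.rpow_mul (hA _), hpq.sub_one_mul_conj]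

lemma ENNReal.ofReal_sum_rpow {ι : Type*} {s : Finset ι} {f : ι → ℝ} (hf : ∀ i ∈ s, 0 ≤ f i)
    (hp : 0 ≤ p) : ENNReal.ofReal (∑ i ∈ s, f i ^ p) = ∑ i ∈ s, ENNReal.ofReal (f i) ^ p := by
  rw [ENNReal.ofReal_sum_of_nonneg fun i hi => Real.rpow_nonneg (hf i hi) p]
  exact sum_congr rfl fun i hi => (ENNReal.ofReal_rpow_of_nonneg (hf i hi) hp).symm

end

/-- Here `c n` stands for `c_{n+1}`. -/
theorem hardy_sequence (p : ℝ) (hp : 1 < p) (c : ℕ → ℝ) (hpos : ∀ k, 0 ≤ c k) :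
    ∑' n : ℕ, (ENNReal.ofReal ((1 / ((n : ℝ) + 1)) * ∑ k ∈ Finset.range (n + 1), c k)) ^ p
      ≤ ENNReal.ofReal (p / (p - 1)) ^ p * ∑' k : ℕ, ENNReal.ofReal (c k) ^ p := by
  have hpq : p.HolderConjugate (p / (p - 1)) := .conjExponent hp
  have hp0 : 0 ≤ p := hpq.nonneg
  rw [ENNReal.tsum_eq_iSup_nat]
  refine iSup_le fun N => ?_
  calc ∑ n ∈ range N, ENNReal.ofReal (cesaroMean c n) ^ p
      = ENNReal.ofReal (∑ n ∈ range N, cesaroMean c n ^ p) :=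
        (ENNReal.ofReal_sum_rpow (fun n _ => cesaroMean_nonneg hpos n) hp0).symm
    _ ≤ ENNReal.ofReal ((p / (p - 1)) ^ p * ∑ k ∈ range N, c k ^ p) :=
        ENNReal.ofReal_le_ofReal (sum_rpow_cesaroMean_le hpq hpos N)
    _ = ENNReal.ofReal (p / (p - 1)) ^ p * ∑ k ∈ range N, ENNReal.ofReal (c k) ^ p := by
        rw [ENNReal.ofReal_mul (by positivity), ENNReal.ofReal_rpow_of_nonneg hpq.symm.nonneg hp0,
          ENNReal.ofReal_sum_rpow (fun k _ => hpos k) hp0]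
    _ ≤ ENNReal.ofReal (p / (p - 1)) ^ p * ∑' k, ENNReal.ofReal (c k) ^ p := by
        gcongr
        exact ENNReal.sum_le_tsum _
end

section
/- Let $p>1$ and let $\psi$ be a nonnegative measurable function on $(0,\infty)$ with $\int_0^\infty \psi^p < \infty$. Then $\int_0^\infty \left(\frac{1}{x}\int_0^x \psi\right)^p dx = \frac{p}{p-1}\int_0^\infty \left(\frac{1}{y}\int_0^y \psi\right)^{p-1}\psi(y)\,dy$. -/
/-!
Write `Φ x = ∫₀ˣ ψ`. Since `ψ ∈ Lᵖ(0, ∞)` is locally integrable, `Φ` is absolutely continuous and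
so is `Φ ^ p`, whose derivative is `p Φ ^ (p - 1) ψ` almost everywhere (Lebesgue
differentiation); hence `Φ x ^ p = p ∫₀ˣ Φ ^ (p - 1) ψ`. Multiplying by `x ^ (-p)`, integrating
over `x > 0` and exchanging the order of integration (Tonelli) leaves the inner integral
`∫_y^∞ x ^ (-p) dx = y ^ (1 - p) / (p - 1)`.
-/

open MeasureTheory Set ENNReal Filter NNReal

theorem AbsolutelyContinuousOnInterval.comp_lipschitzOnWith {X Y : Type*} [PseudoMetricSpace X]
    [PseudoMetricSpace Y] {f : ℝ → X} {g : X → Y} {a b : ℝ} {K : ℝ≥0} {t : Set X}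
    (hf : AbsolutelyContinuousOnInterval f a b) (hg : LipschitzOnWith K g t)
    (hft : MapsTo f (uIcc a b) t) : AbsolutelyContinuousOnInterval (g ∘ f) a b := by
  have hKf := Tendsto.const_mul (K : ℝ) hf
  rw [mul_zero] at hKf
  refine squeeze_zero' (Eventually.of_forall fun _ ↦ Finset.sum_nonneg fun _ _ ↦ dist_nonneg)
    ?_ hKf
  filter_upwards [mem_inf_of_right (mem_principal_self _)] with E hE
  rw [Finset.mul_sum]
  exact Finset.sum_le_sum fun i hi ↦
    hg.dist_le_mul _ (hft (hE.1 i hi).1) _ (hft (hE.1 i hi).2)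

theorem lipschitzOnWith_rpow_Icc {p : ℝ} (hp : 1 ≤ p) (M : ℝ) :
    LipschitzOnWith (p * M ^ (p - 1)).toNNReal (fun t : ℝ ↦ t ^ p) (Icc 0 M) := by
  refine (convex_Icc 0 M).lipschitzOnWith_of_nnnorm_hasDerivWithin_le
    (fun t _ ↦ (Real.hasDerivAt_rpow_const (Or.inr hp)).hasDerivWithinAt) fun t ht ↦ ?_
  rw [← NNReal.coe_le_coe, coe_nnnorm, Real.coe_toNNReal', Real.norm_eq_abs,
    abs_of_nonneg (by have := Real.rpow_nonneg ht.1 (p - 1); positivity)]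
  refine le_max_of_le_left (mul_le_mul_of_nonneg_left ?_ (by linarith))
  exact Real.rpow_le_rpow ht.1 ht.2 (by linarith)

theorem AbsolutelyContinuousOnInterval.rpow_const {f : ℝ → ℝ} {a b p : ℝ}
    (hf : AbsolutelyContinuousOnInterval f a b) (hp : 1 ≤ p)
    (hf₀ : ∀ x ∈ uIcc a b, 0 ≤ f x) : AbsolutelyContinuousOnInterval (fun x ↦ f x ^ p) a b := by
  obtain ⟨M, hM⟩ := hf.exists_bound
  exact hf.comp_lipschitzOnWith (lipschitzOnWith_rpow_Icc hp M)
    fun x hx ↦ ⟨hf₀ x hx, (le_abs_self _).trans (hM x hx)⟩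

theorem integral_primitive_nonneg {ψ : ℝ → ℝ} {a b y : ℝ} (hψ₀ : ∀ t ∈ Icc a b, 0 ≤ ψ t)
    (hy : y ∈ Icc a b) : 0 ≤ ∫ t in a..y, ψ t :=
  intervalIntegral.integral_nonneg hy.1 fun t ht ↦ hψ₀ t ⟨ht.1, ht.2.trans hy.2⟩

theorem integral_mul_primitive_rpow {ψ : ℝ → ℝ} {a b p : ℝ} (hp : 1 ≤ p) (hab : a ≤ b)
    (hψ : IntervalIntegrable ψ volume a b) (hψ₀ : ∀ y ∈ Icc a b, 0 ≤ ψ y) :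
    ∫ y in a..b, p * (∫ t in a..y, ψ t) ^ (p - 1) * ψ y = (∫ t in a..b, ψ t) ^ p := by
  have hΦ₀ : ∀ y ∈ uIcc a b, 0 ≤ ∫ t in a..y, ψ t := by
    rw [uIcc_of_le hab]
    exact fun y hy ↦ integral_primitive_nonneg hψ₀ hy
  have hFTC := ((hψ.absolutelyContinuousOnInterval_intervalIntegral left_mem_uIcc).rpow_const hp
    hΦ₀).integral_deriv_eq_sub
  rw [intervalIntegral.integral_same, Real.zero_rpow (by linarith), sub_zero] at hFTC
  rw [← hFTC]
  refine intervalIntegral.integral_congr_ae ?_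
  filter_upwards [hψ.ae_hasDerivAt_integral] with y hΦ' hy
  rw [((hΦ' (uIoc_subset_uIcc hy) a left_mem_uIcc).rpow_const (Or.inr hp)).deriv]
  ring

theorem ofReal_mul_lintegral_primitive_rpow {ψ : ℝ → ℝ} {a b p : ℝ} (hp : 1 ≤ p) (hab : a ≤ b)
    (hψ : IntegrableOn ψ (Ioo a b)) (hψ₀ : ∀ y ∈ Icc a b, 0 ≤ ψ y) :
    ENNReal.ofReal p * ∫⁻ y in Ioo a b, ENNReal.ofReal ((∫ t in Ioo a y, ψ t) ^ (p - 1) * ψ y)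
      = ENNReal.ofReal ((∫ t in Ioo a b, ψ t) ^ p) := by
  have hIoo {y} (hy : a ≤ y) : ∫ t in Ioo a y, ψ t = ∫ t in a..y, ψ t := by
    rw [intervalIntegral.integral_of_le hy, integral_Ioc_eq_integral_Ioo]
  have hψ' : IntervalIntegrable ψ volume a b :=
    (intervalIntegrable_iff_integrableOn_Ioo_of_le hab).2 hψ
  have hcont : ContinuousOn (fun y ↦ (∫ t in a..y, ψ t) ^ (p - 1)) (Icc a b) := by
    rw [← uIcc_of_le hab]
    exact (hψ'.absolutelyContinuousOnInterval_intervalIntegral left_mem_uIcc).continuousOn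
      |>.rpow_const fun _ _ ↦ Or.inr (by linarith)
  have hint : IntegrableOn (fun y ↦ (∫ t in a..y, ψ t) ^ (p - 1) * ψ y) (Ioo a b) :=
    (((intervalIntegrable_iff_integrableOn_Icc_of_le hab).1 hψ').continuousOn_mul hcont
      isCompact_Icc).mono_set Ioo_subset_Icc_self
  have hnonneg : 0 ≤ᵐ[volume.restrict (Ioo a b)] fun y ↦ (∫ t in a..y, ψ t) ^ (p - 1) * ψ y :=
    (ae_restrict_iff' measurableSet_Ioo).2 <| ae_of_all _ fun y hy ↦
      mul_nonneg (Real.rpow_nonneg (integral_primitive_nonneg hψ₀ (Ioo_subset_Icc_self hy)) _)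
        (hψ₀ y (Ioo_subset_Icc_self hy))
  rw [setLIntegral_congr_fun measurableSet_Ioo fun y hy ↦ by rw [hIoo hy.1.le],
    ← ofReal_integral_eq_lintegral_ofReal hint hnonneg, ← ofReal_mul (by linarith),
    ← integral_const_mul, ← integral_Ioc_eq_integral_Ioo, ← intervalIntegral.integral_of_le hab,
    hIoo hab]
  simp_rw [← mul_assoc]
  rw [integral_mul_primitive_rpow hp hab hψ' hψ₀]

theorem integrableOn_of_lintegral_ofReal_rpow_lt_top {α : Type*} [MeasurableSpace α]
    {μ : Measure α} {s : Set α} {f : α → ℝ} {p : ℝ} (hp : 1 ≤ p) (hs : μ s ≠ ∞)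
    (hf : AEStronglyMeasurable f (μ.restrict s)) (hf₀ : ∀ x, 0 ≤ f x)
    (hfp : ∫⁻ x in s, ENNReal.ofReal (f x ^ p) ∂μ < ∞) : IntegrableOn f s μ := by
  have : IsFiniteMeasure (μ.restrict s) := isFiniteMeasure_restrict.2 hs
  have hLp : MemLp f (ENNReal.ofReal p) (μ.restrict s) := by
    refine ⟨hf, (eLpNorm_lt_top_iff_lintegral_rpow_enorm_lt_top
      (ofReal_pos.2 (by linarith)).ne' ofReal_ne_top).2 ?_⟩
    simpa only [toReal_ofReal (by linarith : 0 ≤ p), Real.enorm_of_nonneg (hf₀ _),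
      ofReal_rpow_of_nonneg (hf₀ _) (by linarith : 0 ≤ p)] using hfp
  exact memLp_one_iff_integrable.1 (hLp.mono_exponent (by simpa using hp))

theorem lintegral_Ioi_rpow_neg {p y : ℝ} (hp : 1 < p) (hy : 0 < y) :
    ∫⁻ x in Ioi y, ENNReal.ofReal (x ^ (-p)) = ENNReal.ofReal (y ^ (1 - p) / (p - 1)) := by
  rw [← ofReal_integral_eq_lintegral_ofReal (integrableOn_Ioi_rpow_of_lt (by linarith) hy)
    ((ae_restrict_iff' measurableSet_Ioi).2 <| ae_of_all _ fun x hx ↦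
      Real.rpow_nonneg (hy.trans hx).le _), integral_Ioi_rpow_of_lt (by linarith) hy]
  congr 1
  rw [show -p + 1 = -(p - 1) by ring, neg_div_neg_eq, show -(p - 1) = 1 - p by ring]

theorem lintegral_Ioi_mul_lintegral_Ioo {f g : ℝ → ℝ≥0∞} (hf : Measurable f) (hg : Measurable g)
    (a : ℝ) :
    ∫⁻ x in Ioi a, g x * ∫⁻ y in Ioo a x, f y = ∫⁻ y in Ioi a, (∫⁻ x in Ioi y, g x) * f y := by
  set F : ℝ → ℝ → ℝ≥0∞ := fun x y ↦ {q : ℝ × ℝ | q.2 < q.1}.indicator (fun q ↦ g q.1 * f q.2) (x, y)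
  have hF : Measurable (Function.uncurry F) :=
    ((hg.comp measurable_fst).mul (hf.comp measurable_snd)).indicator
      (measurableSet_lt measurable_snd measurable_fst)
  have hinner (x : ℝ) : g x * ∫⁻ y in Ioo a x, f y = ∫⁻ y in Ioi a, F x y := by
    rw [← lintegral_const_mul _ hf, ← Iio_inter_Ioi, ← Measure.restrict_restrict measurableSet_Iio,
      ← lintegral_indicator measurableSet_Iio]
    rfl
  have houter {y : ℝ} (hy : a < y) : (∫⁻ x in Ioi y, g x) * f y = ∫⁻ x in Ioi a, F x y := by
    rw [← lintegral_mul_const _ hg, ← inter_eq_left.2 (Ioi_subset_Ioi hy.le),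
      ← Measure.restrict_restrict measurableSet_Ioi, ← lintegral_indicator measurableSet_Ioi]
    rfl
  simp_rw [hinner]
  rw [lintegral_lintegral_swap hF.aemeasurable]
  exact setLIntegral_congr_fun measurableSet_Ioi fun y hy ↦ (houter hy).symm

/-- Key identity in the short proof of Hardy's inequality:
`∫_0^∞ ((1/x)∫_0^x ψ)^p dx = p/(p-1) ∫_0^∞ ((1/y)∫_0^y ψ)^{p-1} ψ(y) dy`. -/
theorem hardy_identity (p : ℝ) (hp : 1 < p) (ψ : ℝ → ℝ)
    (hmeas : Measurable ψ) (hpos : ∀ y, 0 ≤ ψ y)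
    (hint : ∫⁻ y in Ioi (0 : ℝ), ENNReal.ofReal (ψ y ^ p) < ⊤) :
    ∫⁻ x in Ioi (0 : ℝ),
        ENNReal.ofReal ((1 / x * ∫ y in Ioo (0 : ℝ) x, ψ y) ^ p)
      = ENNReal.ofReal (p / (p - 1)) *
        ∫⁻ y in Ioi (0 : ℝ),
          ENNReal.ofReal ((1 / y * ∫ z in Ioo (0 : ℝ) y, ψ z) ^ (p - 1) * ψ y) := by
  have hloc (x : ℝ) : IntegrableOn ψ (Ioo 0 x) :=
    integrableOn_of_lintegral_ofReal_rpow_lt_top hp.le measure_Ioo_lt_top.ne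
      hmeas.aestronglyMeasurable hpos ((lintegral_mono_set Ioo_subset_Ioi_self).trans_lt hint)
  have hΦ₀ (x : ℝ) : 0 ≤ ∫ y in Ioo (0 : ℝ) x, ψ y :=
    setIntegral_nonneg measurableSet_Ioo fun y _ ↦ hpos y
  have hΦ_mono : Monotone fun x ↦ ∫ y in Ioo (0 : ℝ) x, ψ y := fun x y hxy ↦
    setIntegral_mono_set (hloc y) (ae_of_all _ hpos) (Ioo_subset_Ioo_right hxy).eventuallyLE
  have hF : Measurable fun y ↦ ENNReal.ofReal ((∫ z in Ioo (0 : ℝ) y, ψ z) ^ (p - 1) * ψ y) :=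
    ((hΦ_mono.measurable.pow_const _).mul hmeas).ennreal_ofReal
  have hg : Measurable fun x : ℝ ↦ ENNReal.ofReal (x ^ (-p)) :=
    (measurable_id.pow_const _).ennreal_ofReal
  calc ∫⁻ x in Ioi (0 : ℝ), ENNReal.ofReal ((1 / x * ∫ y in Ioo (0 : ℝ) x, ψ y) ^ p)
      = ∫⁻ x in Ioi (0 : ℝ), ENNReal.ofReal p * (ENNReal.ofReal (x ^ (-p)) *
          ∫⁻ y in Ioo 0 x, ENNReal.ofReal ((∫ z in Ioo (0 : ℝ) y, ψ z) ^ (p - 1) * ψ y)) := by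
        refine setLIntegral_congr_fun measurableSet_Ioi fun x (hx : 0 < x) ↦ ?_
        rw [mul_left_comm, ofReal_mul_lintegral_primitive_rpow hp.le hx.le (hloc x)
          fun y _ ↦ hpos y, Real.mul_rpow (by positivity) (hΦ₀ x), one_div,
          Real.inv_rpow hx.le, ← Real.rpow_neg hx.le, ofReal_mul (by positivity)]
    _ = ENNReal.ofReal p * ∫⁻ y in Ioi (0 : ℝ), ENNReal.ofReal (y ^ (1 - p) / (p - 1)) *
          ENNReal.ofReal ((∫ z in Ioo (0 : ℝ) y, ψ z) ^ (p - 1) * ψ y) := by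
        rw [lintegral_const_mul' _ _ ofReal_ne_top, lintegral_Ioi_mul_lintegral_Ioo hF hg]
        congr 1
        exact setLIntegral_congr_fun measurableSet_Ioi fun y (hy : 0 < y) ↦ by
          rw [lintegral_Ioi_rpow_neg hp hy]
    _ = _ := by
        rw [← lintegral_const_mul' _ _ ofReal_ne_top, ← lintegral_const_mul' _ _ ofReal_ne_top]
        refine setLIntegral_congr_fun measurableSet_Ioi fun y (hy : 0 < y) ↦ ?_
        have hp₁ : 0 < p - 1 := by linarith
        rw [← ofReal_mul (by positivity), ← ofReal_mul (by positivity),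
          ← ofReal_mul (by positivity), Real.mul_rpow (by positivity) (hΦ₀ y), one_div,
          Real.inv_rpow hy.le, ← Real.rpow_neg hy.le, neg_sub]
        congr 1
        ring
end

section
/- Let $p>1$, let $\psi$ be a nonnegative $p$-integrable function, and suppose $E(|\psi(Y)|^p)^{1/p} = E(|\psi(Y)|)$, i.e. $\psi(Y)$ is a.s. constant and nonzero. Then the root $\alpha$ of $E(|\psi(Y)|)(p-1+\alpha) = p\{E(|\psi(Y)|^p)\}^{1/p}\alpha^{1/p}$ in $[0,1]$ equals $1$, and the probability theoretic Hardy inequality $\{E(|E(\psi(Y)\mathbf{1}_{[Y\le X]}\mid X)/F(X)|^p)\}^{1/p} \le \frac{p}{p-1+\alpha}\{E(|\psi(Y)|^p)\}^{1/p}$ holds with equality. -/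
/-!
Equality in Jensen's inequality for the strictly convex `x ↦ x ^ p` forces `ψ(Y) = c` a.s., with
`c = E ψ(Y) > 0`. The root equation then reads `p - 1 + α = p α ^ (1 / p)`, and strict Bernoulli
rules out every root but `α = 1`. By independence, `E(ψ(Y) 1[Y ≤ X] | X) = c F(X)`, and `F(X) > 0`
a.s., so the Hardy quotient is a.s. `c` and both sides of the inequality equal `c`.
-/

open MeasureTheory Set ENNReal ProbabilityTheory

/-- Strict Bernoulli: `t ^ p > 1 + p (t - 1)` for `t = α ^ (1 / p) ≠ 1`. -/
lemma eq_one_of_sub_one_add_eq_mul_rpow_one_div {p α : ℝ} (hp : 1 < p) (hα : 0 ≤ α)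
    (h : p - 1 + α = p * α ^ (1 / p)) : α = 1 := by
  set t := α ^ (1 / p)
  have htp : t ^ p = α := by
    rw [← Real.rpow_mul hα, one_div_mul_cancel (by positivity), Real.rpow_one]
  by_contra hne
  have ht1 : t ≠ 1 := fun h1 => hne (by rw [← htp, h1, Real.one_rpow])
  have bernoulli : 1 + p * (t - 1) < (1 + (t - 1)) ^ p :=
    one_add_mul_self_lt_rpow_one_add (by linarith [Real.rpow_nonneg hα (1 / p)])
      (sub_ne_zero.mpr ht1) hp
  rw [add_sub_cancel, htp] at bernoulli
  linarith

lemma integrable_of_integrable_rpow {α : Type*} [MeasurableSpace α] {μ : Measure α}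
    [IsFiniteMeasure μ] {g : α → ℝ} {p : ℝ} (hp : 1 ≤ p) (hg : AEStronglyMeasurable g μ)
    (hg0 : 0 ≤ᵐ[μ] g) (hgp : Integrable (fun x => g x ^ p) μ) : Integrable g μ := by
  have hnorm : Integrable (fun x => ‖g x‖ ^ p) μ :=
    hgp.congr (hg0.mono fun x hx => by simp only [Real.norm_of_nonneg hx])
  simpa only [Real.rpow_one, integrable_norm_iff hg] using
    integrable_norm_rpow_of_le hg zero_le_one (by linarith) hp hnorm

lemma ae_eq_integral_of_integral_rpow_rpow_one_div_eq {α : Type*} [MeasurableSpace α]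
    {μ : Measure α} [IsProbabilityMeasure μ] {g : α → ℝ} {p : ℝ} (hp : 1 < p)
    (hg : AEStronglyMeasurable g μ) (hg0 : 0 ≤ᵐ[μ] g) (hgp : Integrable (fun x => g x ^ p) μ)
    (h : (∫ x, g x ^ p ∂μ) ^ (1 / p) = ∫ x, g x ∂μ) :
    g =ᵐ[μ] fun _ => ∫ x, g x ∂μ := by
  have hpow : (∫ x, g x ∂μ) ^ p = ∫ x, g x ^ p ∂μ := by
    rw [← h, ← Real.rpow_mul (integral_nonneg_of_ae (hg0.mono fun x hx => Real.rpow_nonneg hx p)),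
      one_div_mul_cancel (by positivity), Real.rpow_one]
  rcases (strictConvexOn_rpow hp).ae_eq_const_or_map_average_lt
      (Real.continuous_rpow_const (by positivity)).continuousOn isClosed_Ici hg0
      (integrable_of_integrable_rpow hp.le hg hg0 hgp) hgp with hconst | hlt
  · rwa [average_eq_integral] at hconst
  · simp only [average_eq_integral, hpow, lt_irrefl] at hlt

/-- The null half-lines `Iic x` are covered by the largest one if it exists, and otherwise by the
countably many with rational `x`. -/
lemma ae_measure_Iic_ne_zero (μ : Measure ℝ) : ∀ᵐ x ∂μ, μ (Iic x) ≠ 0 := by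
  set S := {x : ℝ | μ (Iic x) = 0}
  have hS : μ S = 0 := by
    by_cases hmax : ∃ a ∈ S, ∀ x ∈ S, x ≤ a
    · obtain ⟨a, haS, ha⟩ := hmax
      exact measure_mono_null ha haS
    · push Not at hmax
      have hcover : S ⊆ ⋃ q : {q : ℚ // (q : ℝ) ∈ S}, Iic (q : ℝ) := by
        intro x hx
        obtain ⟨y, hyS, hxy⟩ := hmax x hx
        obtain ⟨q, hxq, hqy⟩ := exists_rat_btwn hxy
        exact mem_iUnion.mpr
          ⟨⟨q, measure_mono_null (Iic_subset_Iic.mpr hqy.le) hyS⟩, hxq.le⟩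
      exact measure_mono_null hcover (measure_iUnion_null fun q => q.2)
  exact measure_eq_zero_iff_ae_notMem.mp hS

namespace ProbabilityTheory.IndepFun

variable {Ω : Type*} {mΩ : MeasurableSpace Ω} {P : Measure Ω} [IsFiniteMeasure P]

section

variable {β γ : Type*} [MeasurableSpace β] [MeasurableSpace γ] [StandardBorelSpace γ] [Nonempty γ]
  {X : Ω → β} {Y : Ω → γ}

lemma condDistrib_ae_eq_const (hX : Measurable X) (hY : Measurable Y) (hXY : IndepFun X Y P) :
    condDistrib Y X P =ᵐ[P.map X] Kernel.const β (P.map Y) :=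
  condDistrib_ae_eq_of_measure_eq_compProd_of_measurable hX hY <| by
    rw [Measure.compProd_const,
      ← (indepFun_iff_map_prod_eq_prod_map_map hX.aemeasurable hY.aemeasurable).mp hXY]

lemma condExp_prod_ae_eq_integral_map {f : β × γ → ℝ} (hX : Measurable X) (hY : Measurable Y)
    (hXY : IndepFun X Y P) (hf : StronglyMeasurable f)
    (hf_int : Integrable (fun ω => f (X ω, Y ω)) P) :
    P[fun ω => f (X ω, Y ω) | MeasurableSpace.comap X inferInstance] =ᵐ[P]
      fun ω => ∫ y, f (X ω, y) ∂(P.map Y) := by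
  filter_upwards [condExp_prod_ae_eq_integral_condDistrib hX hY.aemeasurable hf hf_int,
    ae_of_ae_map hX.aemeasurable (hXY.condDistrib_ae_eq_const hX hY)] with ω hω hκ
  rw [hω, hκ, Kernel.const_apply]

end

lemma condExp_ite_le_ae_eq_mul_measure_Iic {X Y : Ω → ℝ} {ψ : ℝ → ℝ} {c : ℝ}
    (hX : Measurable X) (hY : Measurable Y) (hXY : IndepFun X Y P) (hψ : Measurable ψ)
    (hψc : (fun ω => ψ (Y ω)) =ᵐ[P] fun _ => c) :
    P[fun ω => if Y ω ≤ X ω then ψ (Y ω) else 0 | MeasurableSpace.comap X inferInstance] =ᵐ[P]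
      fun ω => c * (P.map Y (Iic (X ω))).toReal := by
  have hf : StronglyMeasurable fun q : ℝ × ℝ => if q.2 ≤ q.1 then ψ q.2 else 0 :=
    (Measurable.ite (measurableSet_le measurable_snd measurable_fst) (hψ.comp measurable_snd)
      measurable_const).stronglyMeasurable
  have hf_int : Integrable (fun ω => if Y ω ≤ X ω then ψ (Y ω) else 0) P :=
    ((integrable_const c).congr hψc.symm).mono
      (hf.measurable.comp (hX.prodMk hY)).aestronglyMeasurable
      (Filter.Eventually.of_forall fun ω => by split_ifs <;> simp)
  have hψc_map : ψ =ᵐ[P.map Y] fun _ => c :=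
    (ae_map_iff hY.aemeasurable (measurableSet_eq_fun hψ measurable_const)).mpr hψc
  filter_upwards [hXY.condExp_prod_ae_eq_integral_map hX hY hf hf_int] with ω hω
  have hindicator : (fun y => if y ≤ X ω then ψ y else 0) =ᵐ[P.map Y]
      (Iic (X ω)).indicator fun _ => c :=
    hψc_map.mono fun y hy => by simp only [indicator_apply, mem_Iic, hy]
  rw [hω, integral_congr_ae hindicator, integral_indicator_const _ measurableSet_Iic,
    Measure.real, smul_eq_mul, mul_comm]

end ProbabilityTheory.IndepFun

/-- Equality case of the sharpened probability theoretic Hardy inequality: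
if `(E ψ(Y)^p)^{1/p} = E ψ(Y)` (i.e. `ψ(Y)` is a.s. constant) and `E ψ(Y) > 0`,
then the root `α` equals `1` and the inequality holds with equality. -/
theorem probability_hardy_equality_case {Ω : Type*} [MeasurableSpace Ω] (P : Measure Ω)
    [IsProbabilityMeasure P] (X Y : Ω → ℝ) (hX : Measurable X) (hY : Measurable Y)
    (hindep : IndepFun X Y P) (hid : Measure.map X P = Measure.map Y P)
    (ψ : ℝ → ℝ) (hψ : Measurable ψ) (hpos : ∀ y, 0 ≤ ψ y) (p : ℝ) (hp : 1 < p)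
    (hmom : ∫⁻ ω, ENNReal.ofReal (ψ (Y ω) ^ p) ∂P < ⊤)
    (hnz : 0 < ∫ ω, ψ (Y ω) ∂P)
    (hconst : (∫ ω, ψ (Y ω) ^ p ∂P) ^ (1 / p) = ∫ ω, ψ (Y ω) ∂P)
    (α : ℝ) (hα : α ∈ Icc (0 : ℝ) 1)
    (hroot : (∫ ω, ψ (Y ω) ∂P) * (p - 1 + α)
        = p * (∫ ω, ψ (Y ω) ^ p ∂P) ^ (1 / p) * α ^ (1 / p)) :
    α = 1 ∧
    (∫⁻ ω, ENNReal.ofReal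
        (|(P[fun ω' => if Y ω' ≤ X ω' then ψ (Y ω') else 0 |
            MeasurableSpace.comap X inferInstance]) ω /
          (Measure.map X P (Iic (X ω))).toReal| ^ p) ∂P) ^ (1 / p)
      = ENNReal.ofReal (p / (p - 1 + α)) *
        (∫⁻ ω, ENNReal.ofReal (ψ (Y ω) ^ p) ∂P) ^ (1 / p) := by
  set c := ∫ ω, ψ (Y ω) ∂P
  have hα1 : α = 1 := eq_one_of_sub_one_add_eq_mul_rpow_one_div hp hα.1 <|
    mul_left_cancel₀ hnz.ne' (by rw [hroot, hconst]; ring)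
  have hψY : Measurable fun ω => ψ (Y ω) := hψ.comp hY
  have hψY_nonneg : 0 ≤ᵐ[P] fun ω => ψ (Y ω) := Filter.Eventually.of_forall fun ω => hpos _
  have hψYp_int : Integrable (fun ω => ψ (Y ω) ^ p) P :=
    ⟨(hψY.pow_const p).aestronglyMeasurable,
      (hasFiniteIntegral_iff_ofReal (hψY_nonneg.mono fun ω h => Real.rpow_nonneg h p)).mpr hmom⟩
  have hψY_const : (fun ω => ψ (Y ω)) =ᵐ[P] fun _ => c :=
    ae_eq_integral_of_integral_rpow_rpow_one_div_eq hp hψY.aestronglyMeasurable hψY_nonneg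
      hψYp_int hconst
  have hlhs : (fun ω => ENNReal.ofReal
      (|(P[fun ω' => if Y ω' ≤ X ω' then ψ (Y ω') else 0 |
          MeasurableSpace.comap X inferInstance]) ω /
        (Measure.map X P (Iic (X ω))).toReal| ^ p)) =ᵐ[P] fun _ => ENNReal.ofReal (c ^ p) := by
    filter_upwards [hindep.condExp_ite_le_ae_eq_mul_measure_Iic hX hY hψ hψY_const,
      ae_of_ae_map hX.aemeasurable (ae_measure_Iic_ne_zero _)] with ω hω hF
    rw [hω, ← hid, mul_div_assoc, div_self (ENNReal.toReal_ne_zero.mpr ⟨hF, measure_ne_top _ _⟩),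
      mul_one, abs_of_pos hnz]
  have hrhs : (fun ω => ENNReal.ofReal (ψ (Y ω) ^ p)) =ᵐ[P] fun _ => ENNReal.ofReal (c ^ p) :=
    hψY_const.mono fun ω h => congrArg (fun t => ENNReal.ofReal (t ^ p)) h
  refine ⟨hα1, ?_⟩
  rw [lintegral_congr_ae hlhs, lintegral_congr_ae hrhs, hα1, sub_add_cancel,
    div_self (by linarith), ENNReal.ofReal_one, one_mul]
end

section
/- Let $F$ be a continuous distribution function, $p>1$, and $\psi$ a nonnegative measurable function with $\int \psi\,dF < \infty$. Then for every $x\in\mathbb{R}$, $\left(\int_{(-\infty,x]}\psi\,dF\right)^p = p\int_{(-\infty,x]}\left(\int_{(-\infty,y]}\psi\,dF\right)^{p-1}\psi(y)\,dF(y)$. -/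
/-!
Let `ν` be the measure `ψ dμ` restricted to `(-∞, x]` and `F y = ν (-∞, y]`; both inner
integrals are values of `F`. As `ν` has no atoms, `F` is continuous, so `{F ≤ t}` is an
interval `(-∞, s]` with `F s = t`. Hence `F` pushes `ν` forward to Lebesgue measure on
`(0, ν ℝ]`, and `p ∫ F ^ (p - 1) dν = p ∫₀^{ν ℝ} t ^ (p - 1) dt = (ν ℝ) ^ p`.
-/

open MeasureTheory Set Filter Topology

section CDF

variable (ν : Measure ℝ) [IsFiniteMeasure ν]

lemma monotone_measureReal_Iic : Monotone fun y => ν.real (Iic y) :=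
  fun _ _ h => measureReal_mono (Iic_subset_Iic.2 h)

lemma tendsto_measureReal_Iic_atBot : Tendsto (fun y => ν.real (Iic y)) atBot (𝓝 0) := by
  have h := tendsto_measure_iInter_atBot (μ := ν) (fun y => measurableSet_Iic.nullMeasurableSet)
    monotone_Iic ⟨0, measure_ne_top ν _⟩
  rw [iInter_Iic_eq_empty_iff.2 (by simp), measure_empty] at h
  exact (ENNReal.tendsto_toReal ENNReal.zero_ne_top).comp h

lemma tendsto_measureReal_Iic_atTop :
    Tendsto (fun y => ν.real (Iic y)) atTop (𝓝 (ν.real univ)) :=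
  (ENNReal.tendsto_toReal (measure_ne_top ν _)).comp (tendsto_measure_Iic_atTop ν)

variable [NullSingletonClass ν]

lemma continuous_measureReal_Iic : Continuous fun y => ν.real (Iic y) := by
  refine continuous_iff_continuousAt.2 fun x => tendsto_iff_dist_tendsto_zero.2 ?_
  have hmono := monotone_measureReal_Iic ν
  have hbound : ∀ y, dist (ν.real (Iic y)) (ν.real (Iic x))
      ≤ ν.real (Icc (x - |y - x|) (x + |y - x|)) := by
    intro y
    have hunion : ν.real (Iic (x + |y - x|))
        ≤ ν.real (Iic (x - |y - x|)) + ν.real (Icc (x - |y - x|) (x + |y - x|)) :=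
      (measureReal_mono Iic_subset_Iic_union_Icc).trans (measureReal_union_le _ _)
    have h1 := le_abs_self (y - x)
    have h2 := neg_abs_le (y - x)
    rw [Real.dist_eq, abs_sub_le_iff]
    constructor <;> linarith [hmono (show y ≤ x + |y - x| by linarith),
      hmono (show x - |y - x| ≤ y by linarith), hmono (show x ≤ x + |y - x| by linarith),
      hmono (show x - |y - x| ≤ x by linarith)]
  have hlim : Tendsto (fun y => ν.real (Icc (x - |y - x|) (x + |y - x|))) (𝓝 x) (𝓝 0) := by
    have hδ : Tendsto (fun y => |y - x|) (𝓝 x) (𝓝 0) := by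
      simpa using (continuous_sub_right x).abs.tendsto x
    exact (ENNReal.tendsto_toReal ENNReal.zero_ne_top).comp ((tendsto_measure_Icc ν x).comp hδ)
  exact squeeze_zero (fun _ => dist_nonneg) hbound hlim

lemma measure_setOf_measureReal_Iic_le (t : ℝ) :
    ν {y | ν.real (Iic y) ≤ t} = ENNReal.ofReal (min (ν.real univ) t) := by
  set F : ℝ → ℝ := fun y => ν.real (Iic y)
  set S : Set ℝ := {y | F y ≤ t}
  have hmono : Monotone F := monotone_measureReal_Iic ν
  have hcont : Continuous F := continuous_measureReal_Iic ν
  rcases le_or_gt (ν.real univ) t with hmt | htm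
  · have : S = univ := eq_univ_of_forall fun y => (measureReal_mono (subset_univ _)).trans hmt
    rw [this, min_eq_left hmt, ofReal_measureReal]
  rw [min_eq_right htm.le]
  rcases S.eq_empty_or_nonempty with hS | ⟨a, ha⟩
  · have ht : t ≤ 0 := by
      by_contra! ht
      obtain ⟨a, ha⟩ := ((tendsto_measureReal_Iic_atBot ν).eventually (gt_mem_nhds ht)).exists
      exact hS.subset (show a ∈ S from ha.le)
    rw [hS, measure_empty, ENNReal.ofReal_of_nonpos ht]
  obtain ⟨b, hb⟩ := ((tendsto_measureReal_Iic_atTop ν).eventually (lt_mem_nhds htm)).exists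
  have hbdd : BddAbove S := ⟨b, fun y (hy : F y ≤ t) => by
    by_contra! hby
    exact (hb.trans_le (hmono hby.le)).not_ge hy⟩
  obtain ⟨u, hu⟩ := mem_range_of_exists_le_of_exists_ge hcont ⟨a, ha⟩ ⟨b, hb.le⟩
  have hs : sSup S ∈ S := (isClosed_le hcont continuous_const).csSup_mem ⟨a, ha⟩ hbdd
  have hSeq : S = Iic (sSup S) :=
    Subset.antisymm (fun y hy => le_csSup hbdd hy) (fun y hy => (hmono hy).trans hs)
  have hFs : F (sSup S) = t :=
    le_antisymm hs (hu ▸ hmono (le_csSup hbdd (show u ∈ S from hu.le)))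
  rw [hSeq, ← ofReal_measureReal, ← hFs]

lemma map_measureReal_Iic :
    ν.map (fun y => ν.real (Iic y)) = volume.restrict (Ioc 0 (ν.real univ)) := by
  have hF := (continuous_measureReal_Iic ν).measurable
  refine Measure.ext_of_Iic _ _ fun t => ?_
  rw [Measure.map_apply hF measurableSet_Iic, Measure.restrict_apply measurableSet_Iic,
    inter_comm, Ioc_inter_Iic, Real.volume_Ioc, sub_zero]
  exact measure_setOf_measureReal_Iic_le ν t

lemma mul_integral_measureReal_Iic_rpow {p : ℝ} (hp : 0 < p) :
    p * ∫ y, ν.real (Iic y) ^ (p - 1) ∂ν = ν.real univ ^ p := by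
  have hF := (continuous_measureReal_Iic ν).measurable
  rw [← integral_map hF.aemeasurable (f := fun t => t ^ (p - 1))
    (by fun_prop : Measurable fun t : ℝ => t ^ (p - 1)).aestronglyMeasurable,
    map_measureReal_Iic, ← intervalIntegral.integral_of_le measureReal_nonneg,
    integral_rpow (Or.inl (by linarith)), sub_add_cancel, Real.zero_rpow hp.ne', sub_zero,
    mul_div_cancel₀ _ hp.ne']

end CDF

section WithDensity

variable {α : Type*} [MeasurableSpace α] {μ : Measure α} {f : α → ℝ}

lemma measureReal_withDensity_ofReal {s : Set α} (hs : MeasurableSet s)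
    (hf : 0 ≤ᵐ[μ.restrict s] f) (hfm : AEStronglyMeasurable f (μ.restrict s)) :
    (μ.withDensity fun y => ENNReal.ofReal (f y)).real s = ∫ y in s, f y ∂μ := by
  rw [measureReal_def, withDensity_apply _ hs, integral_eq_lintegral_of_nonneg_ae hf hfm]

lemma integral_withDensity_ofReal (hf : 0 ≤ᵐ[μ] f) (hfm : AEMeasurable f μ) (g : α → ℝ) :
    ∫ y, g y ∂μ.withDensity (fun y => ENNReal.ofReal (f y)) = ∫ y, f y * g y ∂μ := by
  rw [integral_withDensity_eq_integral_toReal_smul₀ hfm.ennreal_ofReal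
    (ae_of_all _ fun _ => ENNReal.ofReal_lt_top)]
  refine integral_congr_ae (hf.mono fun y hy => ?_)
  simp only [ENNReal.toReal_ofReal hy, smul_eq_mul]

end WithDensity

theorem integral_power_identity_general (μ : Measure ℝ)
    (hatom : ∀ x : ℝ, μ {x} = 0) (p : ℝ) (hp : 1 < p)
    (ψ : ℝ → ℝ) (hpos : ∀ y, 0 ≤ ψ y)
    (hint : Integrable ψ μ) (x : ℝ) :
    (∫ y in Iic x, ψ y ∂μ) ^ p
      = p * ∫ y in Iic x, (∫ z in Iic y, ψ z ∂μ) ^ (p - 1) * ψ y ∂μ := by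
  have : NullSingletonClass μ := ⟨hatom⟩
  have := isFiniteMeasure_withDensity_ofReal hint.hasFiniteIntegral
  set ν := (μ.withDensity fun y => ENNReal.ofReal (ψ y)).restrict (Iic x) with hν
  have hcdf (y : ℝ) (hy : y ≤ x) : ν.real (Iic y) = ∫ z in Iic y, ψ z ∂μ := by
    rw [measureReal_restrict_apply measurableSet_Iic, Iic_inter_Iic, inf_eq_left.2 hy,
      measureReal_withDensity_ofReal measurableSet_Iic (ae_of_all _ hpos)
        hint.aestronglyMeasurable.restrict]
  have htot : ν.real univ = ∫ z in Iic x, ψ z ∂μ := by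
    rw [measureReal_restrict_apply_univ, measureReal_withDensity_ofReal measurableSet_Iic
      (ae_of_all _ hpos) hint.aestronglyMeasurable.restrict]
  have hintegral (g : ℝ → ℝ) : ∫ y, g y ∂ν = ∫ y in Iic x, ψ y * g y ∂μ := by
    rw [hν, restrict_withDensity measurableSet_Iic,
      integral_withDensity_ofReal (ae_of_all _ hpos) hint.aemeasurable.restrict]
  rw [← htot, ← mul_integral_measureReal_Iic_rpow ν (by linarith), hintegral]
  refine congrArg (p * ·) (setIntegral_congr_fun measurableSet_Iic fun y hy => ?_)
  rw [hcdf y hy, mul_comm]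

/-- The `fundamental theorem` identity: for a continuous (atomless) distribution `μ`
and a nonnegative `μ`-integrable `ψ`,
`(∫_{(-∞,x]} ψ dF)^p = p ∫_{(-∞,x]} (∫_{(-∞,y]} ψ dF)^{p-1} ψ(y) dF(y)`. -/
theorem integral_power_identity (μ : Measure ℝ) [IsProbabilityMeasure μ]
    (hatom : ∀ x : ℝ, μ {x} = 0) (p : ℝ) (hp : 1 < p)
    (ψ : ℝ → ℝ) (hψ : Measurable ψ) (hpos : ∀ y, 0 ≤ ψ y)
    (hint : Integrable ψ μ) (x : ℝ) :
    (∫ y in Iic x, ψ y ∂μ) ^ p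
      = p * ∫ y in Iic x, (∫ z in Iic y, ψ z ∂μ) ^ (p - 1) * ψ y ∂μ :=
  integral_power_identity_general μ hatom p hp ψ hpos hint x
end

section
/- Let $0<p<1$ and let $\psi$ be a nonnegative measurable function on $(0,\infty)$ such that $\int_x^\infty \psi < \infty$ for all $x>0$. Then $\int_0^\infty\left(\frac{1}{x}\int_x^\infty \psi\right)^p dx = \frac{p}{1-p}\int_0^\infty \left(\frac{1}{y}\int_y^\infty \psi\right)^{p-1}\psi(y)\,dy$. -/
/-!
Write `F y = ∫_y^∞ ψ`. The measure `ψ(y) dy` on `(x, ∞)` is pushed forward by its own tail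
function, which is `F`, to Lebesgue measure on `(0, F x]`; so the substitution `t = F y` gives
`∫_x^∞ F^{p-1} ψ = ∫_0^{F x} t^{p-1} dt = F(x)^p / p`.
Hence `(F(x)/x)^p = p x^{-p} ∫_x^∞ F^{p-1} ψ`, and Tonelli's theorem with
`∫_0^y x^{-p} dx = y^{1-p}/(1-p)` gives the identity.
-/

open MeasureTheory Set ENNReal Filter Topology

section TailTransform

variable {μ : Measure ℝ} [IsFiniteMeasure μ]

lemma antitone_measureReal_Ioi : Antitone fun y => μ.real (Ioi y) :=
  fun _ _ h => measureReal_mono (Ioi_subset_Ioi h)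

lemma tendsto_measureReal_Ioi_atTop : Tendsto (fun y => μ.real (Ioi y)) atTop (𝓝 0) := by
  have h := tendsto_measure_iInter_atTop (μ := μ) (s := Ioi)
    (fun _ => measurableSet_Ioi.nullMeasurableSet) (fun _ _ h => Ioi_subset_Ioi h)
    ⟨0, measure_ne_top _ _⟩
  rw [show ⋂ y : ℝ, Ioi y = ∅ from iInter_eq_empty_iff.2 fun y => ⟨y, lt_irrefl y⟩,
    measure_empty] at h
  exact (ENNReal.tendsto_toReal zero_ne_top).comp h

lemma tendsto_measureReal_Ioi_atBot :
    Tendsto (fun y => μ.real (Ioi y)) atBot (𝓝 (μ.real univ)) := by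
  have h := tendsto_measure_iUnion_atBot (μ := μ) (s := Ioi) (fun _ _ h => Ioi_subset_Ioi h)
  rw [iUnion_Ioi] at h
  exact (ENNReal.tendsto_toReal (measure_ne_top _ _)).comp h

variable [NullSingletonClass μ]

lemma continuous_measureReal_Ioi : Continuous fun y => μ.real (Ioi y) := by
  refine continuous_iff_continuousAt.2 fun y₀ => ?_
  simp_rw [← integral_indicator_one measurableSet_Ioi]
  refine continuousAt_of_dominated (bound := 1) (.of_forall fun y =>
    (measurable_const.indicator measurableSet_Ioi).aestronglyMeasurable)
    (.of_forall fun y => .of_forall fun z => ?_) (integrable_const 1) ?_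
  · exact (norm_indicator_le_norm_self _ _).trans_eq (by simp)
  · filter_upwards [μ.ae_ne y₀] with z hz
    have : (fun y => (Ioi y).indicator (1 : ℝ → ℝ) z) = (Iio z).indicator 1 := by
      ext y; simp [indicator_apply]
    rw [this]
    exact continuousOn_const.continuousAt_indicator (by simpa using hz.symm)

lemma exists_measureReal_Ioi_preimage_Iic_eq_Ici {a : ℝ} (ha : a < μ.real univ)
    (hne : ((fun y => μ.real (Ioi y)) ⁻¹' Iic a).Nonempty) :
    ∃ σ, (fun y => μ.real (Ioi y)) ⁻¹' Iic a = Ici σ ∧ μ.real (Ioi σ) = a := by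
  set S := (fun y => μ.real (Ioi y)) ⁻¹' Iic a
  obtain ⟨b, hb⟩ := eventually_atBot.1 (tendsto_measureReal_Ioi_atBot.eventually (lt_mem_nhds ha))
  have hbdd : BddBelow S := ⟨b, fun y hy => le_of_lt (not_le.1 fun hyb => (hb y hyb).not_ge hy)⟩
  have hσ : sInf S ∈ S := (isClosed_Iic.preimage continuous_measureReal_Ioi).csInf_mem hne hbdd
  refine ⟨sInf S, Set.ext fun y => ⟨fun hy => csInf_le hbdd hy,
    fun hy => (antitone_measureReal_Ioi hy).trans hσ⟩, le_antisymm hσ ?_⟩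
  have hleft : ∀ᶠ y in 𝓝[<] sInf S, a ≤ μ.real (Ioi y) :=
    eventually_nhdsWithin_of_forall fun y hy =>
      le_of_lt (not_le.1 fun h => (mem_Iio.1 hy).not_ge (csInf_le hbdd h))
  exact ge_of_tendsto (continuous_measureReal_Ioi.continuousAt.mono_left nhdsWithin_le_nhds) hleft

/-- Probability integral transform, for the tail function instead of the distribution function. -/
theorem map_measureReal_Ioi :
    μ.map (fun y => μ.real (Ioi y)) = volume.restrict (Ioc 0 (μ.real univ)) := by
  refine Measure.ext_of_Iic _ _ fun a => ?_
  rw [Measure.map_apply continuous_measureReal_Ioi.measurable measurableSet_Iic,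
    Measure.restrict_apply' measurableSet_Ioc, inter_comm, Ioc_inter_Iic, Real.volume_Ioc,
    sub_zero]
  rcases le_or_gt (μ.real univ) a with haM | haM
  · have hS : (fun y => μ.real (Ioi y)) ⁻¹' Iic a = univ :=
      eq_univ_of_forall fun y => (measureReal_mono (subset_univ _)).trans haM
    rw [min_eq_left haM, hS, ofReal_measureReal]
  rw [min_eq_right haM.le]
  rcases eq_empty_or_nonempty ((fun y => μ.real (Ioi y)) ⁻¹' Iic a) with hS | hS
  · have ha : a ≤ 0 := by
      by_contra! ha
      obtain ⟨y, hy⟩ :=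
        ((tendsto_measureReal_Ioi_atTop (μ := μ)).eventually (gt_mem_nhds ha)).exists
      exact hS.subset (show y ∈ _ from hy.le)
    rw [hS, measure_empty, ofReal_of_nonpos ha]
  obtain ⟨σ, hSσ, hσ⟩ := exists_measureReal_Ioi_preimage_Iic_eq_Ici haM hS
  rw [hSσ, ← measure_congr Ioi_ae_eq_Ici, ← hσ, ofReal_measureReal]

end TailTransform

lemma lintegral_Ioc_rpow {r a : ℝ} (hr : -1 < r) (ha : 0 ≤ a) :
    ∫⁻ t in Ioc 0 a, ENNReal.ofReal (t ^ r) = ENNReal.ofReal (a ^ (r + 1) / (r + 1)) := by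
  rw [← ofReal_integral_eq_lintegral_ofReal (intervalIntegral.intervalIntegrable_rpow' hr).1
      ((ae_restrict_iff' measurableSet_Ioc).2 (.of_forall fun t ht => Real.rpow_nonneg ht.1.le _)),
    ← intervalIntegral.integral_of_le ha, integral_rpow (.inl hr),
    Real.zero_rpow (by linarith), sub_zero]

lemma lintegral_Ioi_lintegral_Ioi_swap {a : ℝ} {f : ℝ → ℝ → ℝ≥0∞}
    (hf : Measurable (Function.uncurry f)) :
    ∫⁻ x in Ioi a, ∫⁻ y in Ioi x, f x y = ∫⁻ y in Ioi a, ∫⁻ x in Ioo a y, f x y := by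
  have hinner : ∀ x ∈ Ioi a, ∫⁻ y in Ioi x, f x y = ∫⁻ y in Ioi a, (Ioi x).indicator (f x) y :=
    fun x hx => by
      rw [lintegral_indicator measurableSet_Ioi, Measure.restrict_restrict measurableSet_Ioi,
        Ioi_inter_Ioi, sup_eq_left.2 (le_of_lt hx)]
  have hswapped : ∀ y, ∫⁻ x in Ioi a, (Ioi x).indicator (f x) y = ∫⁻ x in Ioo a y, f x y :=
    fun y => by
      have : (fun x => (Ioi x).indicator (f x) y) = (Iio y).indicator (f · y) := by
        ext x; simp [indicator_apply]
      rw [this, lintegral_indicator measurableSet_Iio, Measure.restrict_restrict measurableSet_Iio,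
        Iio_inter_Ioi]
  have hmeas : Measurable (Function.uncurry fun x y => (Ioi x).indicator (f x) y) := by
    have : (Function.uncurry fun x y => (Ioi x).indicator (f x) y)
        = {q : ℝ × ℝ | q.1 < q.2}.indicator (Function.uncurry f) := by
      ext ⟨x, y⟩; simp [indicator_apply]
    rw [this]
    exact hf.indicator (measurableSet_lt measurable_fst measurable_snd)
  rw [setLIntegral_congr_fun measurableSet_Ioi hinner,
    lintegral_lintegral_swap hmeas.aemeasurable]
  simp_rw [hswapped]

section TailIntegral

variable {ψ : ℝ → ℝ}

lemma measurable_setIntegral_Ioi (hψ : Measurable ψ) :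
    Measurable fun y => ∫ z in Ioi y, ψ z := by
  have h : StronglyMeasurable fun q : ℝ × ℝ => {q : ℝ × ℝ | q.1 < q.2}.indicator (ψ ∘ Prod.snd) q :=
    ((hψ.comp measurable_snd).indicator
      (measurableSet_lt measurable_fst measurable_snd)).stronglyMeasurable
  convert (h.integral_prod_right' (ν := volume)).measurable using 2 with y
  rw [← integral_indicator measurableSet_Ioi]
  rfl

variable {x : ℝ}

theorem lintegral_comp_setIntegral_Ioi_mul (hψ : Measurable ψ) (hpos : ∀ y, 0 ≤ ψ y)
    (hint : IntegrableOn ψ (Ioi x)) {g : ℝ → ℝ≥0∞} (hg : Measurable g) :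
    ∫⁻ y in Ioi x, g (∫ z in Ioi y, ψ z) * ENNReal.ofReal (ψ y)
      = ∫⁻ t in Ioc 0 (∫ z in Ioi x, ψ z), g t := by
  set ν := (volume.restrict (Ioi x)).withDensity fun y => ENNReal.ofReal (ψ y)
  have hν : ∀ s, MeasurableSet s → s ⊆ Ioi x → ν s = ENNReal.ofReal (∫ z in s, ψ z) := by
    intro s hs hsx
    rw [withDensity_apply _ hs, Measure.restrict_restrict hs, inter_eq_left.2 hsx,
      ofReal_integral_eq_lintegral_ofReal (hint.mono_set hsx) (.of_forall hpos)]
  have hνuniv : ν univ = ν (Ioi x) := by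
    rw [withDensity_apply _ .univ, withDensity_apply _ measurableSet_Ioi, Measure.restrict_univ,
      Measure.restrict_restrict measurableSet_Ioi, inter_self]
  have hνIoi : ∀ y, x ≤ y → ν.real (Ioi y) = ∫ z in Ioi y, ψ z := fun y hy => by
    rw [measureReal_def, hν _ measurableSet_Ioi (Ioi_subset_Ioi hy),
      toReal_ofReal (setIntegral_nonneg measurableSet_Ioi fun z _ => hpos z)]
  have : IsFiniteMeasure ν :=
    ⟨by rw [hνuniv, hν _ measurableSet_Ioi subset_rfl]; exact ofReal_lt_top⟩
  have hT := (continuous_measureReal_Ioi (μ := ν)).measurable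
  calc ∫⁻ y in Ioi x, g (∫ z in Ioi y, ψ z) * ENNReal.ofReal (ψ y)
      = ∫⁻ y in Ioi x, ENNReal.ofReal (ψ y) * g (ν.real (Ioi y)) :=
        setLIntegral_congr_fun measurableSet_Ioi fun y hy => by rw [hνIoi y (le_of_lt hy), mul_comm]
    _ = ∫⁻ y, g (ν.real (Ioi y)) ∂ν :=
        (lintegral_withDensity_eq_lintegral_mul _ (by fun_prop) (hg.comp hT)).symm
    _ = ∫⁻ t, g t ∂(ν.map fun y => ν.real (Ioi y)) := (lintegral_map hg hT).symm
    _ = ∫⁻ t in Ioc 0 (∫ z in Ioi x, ψ z), g t := by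
        rw [map_measureReal_Ioi, measureReal_def, hνuniv, ← measureReal_def, hνIoi x le_rfl]

theorem lintegral_setIntegral_Ioi_rpow_mul {p : ℝ} (hp : 0 < p) (hψ : Measurable ψ)
    (hpos : ∀ y, 0 ≤ ψ y) (hint : IntegrableOn ψ (Ioi x)) :
    ∫⁻ y in Ioi x, ENNReal.ofReal ((∫ z in Ioi y, ψ z) ^ (p - 1) * ψ y)
      = ENNReal.ofReal ((∫ z in Ioi x, ψ z) ^ p / p) := by
  have hF : ∀ y, 0 ≤ ∫ z in Ioi y, ψ z := fun y =>
    setIntegral_nonneg measurableSet_Ioi fun z _ => hpos z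
  simp_rw [ENNReal.ofReal_mul (Real.rpow_nonneg (hF _) _)]
  rw [lintegral_comp_setIntegral_Ioi_mul hψ hpos hint (g := fun t => ENNReal.ofReal (t ^ (p - 1)))
    (by fun_prop), lintegral_Ioc_rpow (by linarith) (hF x), sub_add_cancel]

end TailIntegral

/-- Identity from the smoothed proof of the reversed Hardy inequality for `0 < p < 1`:
`∫_0^∞ ((1/x)∫_x^∞ ψ)^p dx = p/(1-p) ∫_0^∞ ((1/y)∫_y^∞ ψ)^{p-1} ψ(y) dy`. -/
theorem hardy_identity_reversed (p : ℝ) (hp0 : 0 < p) (hp1 : p < 1) (ψ : ℝ → ℝ)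
    (hmeas : Measurable ψ) (hpos : ∀ y, 0 ≤ ψ y)
    (hint : ∀ x : ℝ, 0 < x → IntegrableOn ψ (Ioi x)) :
    ∫⁻ x in Ioi (0 : ℝ),
        ENNReal.ofReal (((∫ y in Ioi x, ψ y) / x) ^ p)
      = ENNReal.ofReal (p / (1 - p)) *
        ∫⁻ y in Ioi (0 : ℝ),
          ENNReal.ofReal (((∫ z in Ioi y, ψ z) / y) ^ (p - 1) * ψ y) := by
  set F : ℝ → ℝ := fun y => ∫ z in Ioi y, ψ z
  have hF : ∀ y, 0 ≤ F y := fun y => setIntegral_nonneg measurableSet_Ioi fun z _ => hpos z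
  have houter : ∀ x ∈ Ioi (0 : ℝ), ENNReal.ofReal ((F x / x) ^ p) = ENNReal.ofReal p *
      ∫⁻ y in Ioi x, ENNReal.ofReal (x ^ (-p)) * ENNReal.ofReal (F y ^ (p - 1) * ψ y) := by
    intro x (hx : 0 < x)
    rw [lintegral_const_mul' _ _ ofReal_ne_top,
      lintegral_setIntegral_Ioi_rpow_mul hp0 hmeas hpos (hint x hx),
      ← ofReal_mul (by positivity), ← ofReal_mul hp0.le, Real.div_rpow (hF x) hx.le,
      Real.rpow_neg hx.le]
    field_simp
    rfl
  have hinner : ∀ y ∈ Ioi (0 : ℝ),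
      ∫⁻ x in Ioo 0 y, ENNReal.ofReal (x ^ (-p)) * ENNReal.ofReal (F y ^ (p - 1) * ψ y)
        = ENNReal.ofReal (1 / (1 - p)) * ENNReal.ofReal ((F y / y) ^ (p - 1) * ψ y) := by
    intro y (hy : 0 < y)
    rw [lintegral_mul_const' _ _ ofReal_ne_top, setLIntegral_congr Ioo_ae_eq_Ioc,
      lintegral_Ioc_rpow (by linarith) hy.le, show -p + 1 = 1 - p by ring,
      ← ofReal_mul (div_nonneg (by positivity) (by linarith)), ← ofReal_mul (by positivity),
      Real.div_rpow (hF y) hy.le,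
      show y ^ (1 - p) = (y ^ (p - 1))⁻¹ by rw [← Real.rpow_neg hy.le, neg_sub]]
    field_simp
  calc ∫⁻ x in Ioi (0 : ℝ), ENNReal.ofReal ((F x / x) ^ p)
      = ∫⁻ x in Ioi (0 : ℝ), ENNReal.ofReal p *
          ∫⁻ y in Ioi x, ENNReal.ofReal (x ^ (-p)) * ENNReal.ofReal (F y ^ (p - 1) * ψ y) :=
        setLIntegral_congr_fun measurableSet_Ioi houter
    _ = ENNReal.ofReal p * ∫⁻ y in Ioi (0 : ℝ),
          ∫⁻ x in Ioo 0 y, ENNReal.ofReal (x ^ (-p)) * ENNReal.ofReal (F y ^ (p - 1) * ψ y) := by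
        have hFm : Measurable F := measurable_setIntegral_Ioi hmeas
        rw [lintegral_const_mul' _ _ ofReal_ne_top, lintegral_Ioi_lintegral_Ioi_swap (by fun_prop)]
    _ = _ := by
        rw [setLIntegral_congr_fun measurableSet_Ioi hinner, lintegral_const_mul' _ _ ofReal_ne_top,
          ← mul_assoc, ← ofReal_mul hp0.le, mul_one_div]
end

section
/- Let $0<p<1$ and let $(a_i)_{i\ge 1}$ be nonnegative reals. Then $\left(1+\frac{1}{1-p}\right)\left(\sum_{i=1}^\infty a_i\right)^p + \sum_{j=2}^\infty\left(\frac{1}{j}\sum_{h=j}^\infty a_h\right)^p \ge \left(\frac{p}{1-p}\right)^p \sum_{i=1}^\infty a_i^p$. -/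
/-!
Write `B n = ∑_{i ≥ n} a i`, `s n = (B n / (n + 1)) ^ p` and `u n = a n (n + 1)^(1-p) B n^(p-1)`.
Since `a n ^ p = u n ^ p * s n ^ (1 - p)`, Hölder's inequality with exponents `1/p` and `1/(1-p)`
gives `∑ a n ^ p ≤ (∑ u n) ^ p (∑ s n) ^ (1 - p)`. The tangent-line bounds for the concave powers
`t ^ p` and `t ^ (1 - p)` give
`p u n + (n + 2)^(1-p) B (n+1)^p ≤ (n + 1)^(1-p) B n^p + (1 - p) s n`,
which telescopes to `p ∑ u ≤ B 0 ^ p + (1 - p) ∑ s`. Hence `(p / (1 - p)) ∑ u` and `∑ s` are both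
at most `B 0 ^ p / (1 - p) + ∑ s`.
-/

open ENNReal

namespace Real

theorem rpow_le_add_mul_rpow_sub_one_mul_sub {p x y : ℝ} (hp0 : 0 ≤ p) (hp1 : p ≤ 1)
    (hx : 0 < x) (hy : 0 ≤ y) : y ^ p ≤ x ^ p + p * x ^ (p - 1) * (y - x) := by
  have h := rpow_one_add_le_one_add_mul_self (s := y / x - 1)
    (by linarith [div_nonneg hy hx.le]) hp0 hp1
  rw [add_sub_cancel, div_rpow hy hx.le, div_le_iff₀ (rpow_pos_of_pos hx p)] at h
  rw [rpow_sub_one hx.ne']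
  calc y ^ p ≤ (1 + p * (y / x - 1)) * x ^ p := h
    _ = _ := by field_simp

end Real

namespace ENNReal

theorem ofReal_mul_mul_rpow_sub_one_add_rpow_le {p : ℝ} (hp0 : 0 < p) (hp1 : p ≤ 1)
    (a b : ℝ≥0∞) : ENNReal.ofReal p * a * (a + b) ^ (p - 1) + b ^ p ≤ (a + b) ^ p := by
  rcases eq_or_ne (a + b) ⊤ with htop | htop
  · simp [htop, top_rpow_of_pos hp0]
  rcases eq_or_ne (a + b) 0 with hzero | hzero
  · obtain ⟨rfl, rfl⟩ := add_eq_zero.mp hzero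
    simp [zero_rpow_of_pos hp0]
  obtain ⟨ha, hb⟩ := add_ne_top.mp htop
  have hpos : 0 < a.toReal + b.toReal := by
    rw [← toReal_add ha hb]; exact toReal_pos hzero htop
  have key := Real.rpow_le_add_mul_rpow_sub_one_mul_sub hp0.le hp1 hpos (toReal_nonneg (a := b))
  rw [← ofReal_toReal ha, ← ofReal_toReal hb, ← ofReal_add toReal_nonneg toReal_nonneg,
    ofReal_rpow_of_pos hpos, ofReal_rpow_of_nonneg toReal_nonneg hp0.le,
    ofReal_rpow_of_nonneg hpos.le hp0.le, ← ofReal_mul hp0.le, ← ofReal_mul (by positivity),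
    ← ofReal_add (by positivity) (by positivity)]
  exact ofReal_le_ofReal (by linarith)

theorem natCast_add_two_rpow_le {p : ℝ} (hp0 : 0 ≤ p) (hp1 : p ≤ 1) (n : ℕ) :
    ((n : ℝ≥0∞) + 2) ^ (1 - p)
      ≤ ((n : ℝ≥0∞) + 1) ^ (1 - p) + ENNReal.ofReal (1 - p) * (((n : ℝ≥0∞) + 1) ^ p)⁻¹ := by
  have hx : (0 : ℝ) < n + 1 := by positivity
  have key := Real.rpow_le_add_mul_rpow_sub_one_mul_sub (x := n + 1) (y := n + 2)
    (p := 1 - p) (by linarith) (by linarith) hx (by positivity)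
  rw [show (1 - p - 1) = -p by ring, Real.rpow_neg hx.le] at key
  have hcast : ∀ k : ℝ, 0 ≤ k → ((n : ℝ≥0∞) + ENNReal.ofReal k) = ENNReal.ofReal (n + k) :=
    fun k hk => by rw [ofReal_add (by positivity) hk, ofReal_natCast]
  rw [← ofReal_one, ← ofReal_ofNat 2, hcast 1 zero_le_one, hcast 2 zero_le_two,
    ofReal_rpow_of_pos (by positivity), ofReal_rpow_of_pos hx, ofReal_rpow_of_pos hx,
    ← ofReal_inv_of_pos (by positivity), ← ofReal_mul (by linarith),
    ← ofReal_add (by positivity) (by positivity)]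
  exact ofReal_le_ofReal (by linarith)

theorem tsum_le_add_tsum_of_add_le {x c e : ℕ → ℝ≥0∞}
    (h : ∀ n, x n + c (n + 1) ≤ c n + e n) : ∑' n, x n ≤ c 0 + ∑' n, e n := by
  have partial_le : ∀ N, ∑ n ∈ Finset.range N, x n + c N ≤ c 0 + ∑ n ∈ Finset.range N, e n := by
    intro N
    induction N with
    | zero => simp
    | succ N ih =>
      calc ∑ n ∈ Finset.range (N + 1), x n + c (N + 1)
          = ∑ n ∈ Finset.range N, x n + (x N + c (N + 1)) := by
            rw [Finset.sum_range_succ, add_assoc]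
        _ ≤ ∑ n ∈ Finset.range N, x n + c N + e N := by
            rw [add_assoc]; exact add_le_add le_rfl (h N)
        _ ≤ c 0 + ∑ n ∈ Finset.range (N + 1), e n := by
            rw [Finset.sum_range_succ, ← add_assoc]; gcongr
  refine tsum_le_of_sum_range_le fun N => ?_
  calc ∑ n ∈ Finset.range N, x n ≤ c 0 + ∑ n ∈ Finset.range N, e n :=
        le_self_add.trans (partial_le N)
    _ ≤ c 0 + ∑' n, e n := by gcongr; exact ENNReal.sum_le_tsum _

theorem tsum_rpow_mul_rpow_le {α : Type*} {p q : ℝ} (hp : 0 ≤ p) (hq : 0 ≤ q) (hpq : p + q = 1)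
    (f g : α → ℝ≥0∞) : ∑' i, f i ^ p * g i ^ q ≤ (∑' i, f i) ^ p * (∑' i, g i) ^ q := by
  let : MeasurableSpace α := ⊤
  simpa only [MeasureTheory.lintegral_count] using
    lintegral_mul_norm_pow_le (μ := MeasureTheory.Measure.count)
      (measurable_from_top (f := f)).aemeasurable (measurable_from_top (f := g)).aemeasurable
      hp hq hpq

end ENNReal

section Hardy

variable (a : ℕ → ℝ≥0∞)

noncomputable def tailSum (n : ℕ) : ℝ≥0∞ := ∑' i, a (i + n)

-- In the paper's indexing from `1`, this is `(1 / j) ∑_{h ≥ j} a_h` with `j = n + 1`.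
noncomputable def tailMean (n : ℕ) : ℝ≥0∞ := ((n : ℝ≥0∞) + 1)⁻¹ * tailSum a n

noncomputable def hardyWeight (p : ℝ) (n : ℕ) : ℝ≥0∞ :=
  a n * ((n : ℝ≥0∞) + 1) ^ (1 - p) * tailSum a n ^ (p - 1)

variable {p : ℝ}

theorem tailSum_eq_add_tailSum_succ (n : ℕ) : tailSum a n = a n + tailSum a (n + 1) := by
  rw [tailSum, tailSum, tsum_eq_zero_add' ENNReal.summable, zero_add]
  exact congrArg _ (tsum_congr fun i => by rw [add_right_comm, add_assoc])

theorem antitone_tailSum : Antitone (tailSum a) :=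
  antitone_nat_of_succ_le fun n => (tailSum_eq_add_tailSum_succ a n).symm ▸ le_add_self

theorem ofReal_mul_hardyWeight_add_le (hp0 : 0 < p) (hp1 : p ≤ 1) (n : ℕ) :
    ENNReal.ofReal p * hardyWeight a p n + ((n : ℝ≥0∞) + 2) ^ (1 - p) * tailSum a (n + 1) ^ p
      ≤ ((n : ℝ≥0∞) + 1) ^ (1 - p) * tailSum a n ^ p
        + ENNReal.ofReal (1 - p) * tailMean a n ^ p := by
  set W := ((n : ℝ≥0∞) + 1) ^ (1 - p)
  set b := tailSum a (n + 1)
  have hB : tailSum a n = a n + b := tailSum_eq_add_tailSum_succ a n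
  have hmean : tailMean a n ^ p = (((n : ℝ≥0∞) + 1) ^ p)⁻¹ * tailSum a n ^ p := by
    rw [tailMean, mul_rpow_of_nonneg _ _ hp0.le, inv_rpow]
  rw [hardyWeight]
  calc ENNReal.ofReal p * (a n * W * tailSum a n ^ (p - 1)) + ((n : ℝ≥0∞) + 2) ^ (1 - p) * b ^ p
      ≤ ENNReal.ofReal p * (a n * W * tailSum a n ^ (p - 1))
          + (W + ENNReal.ofReal (1 - p) * (((n : ℝ≥0∞) + 1) ^ p)⁻¹) * b ^ p := by
        gcongr; exact natCast_add_two_rpow_le hp0.le hp1 n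
    _ = W * (ENNReal.ofReal p * a n * tailSum a n ^ (p - 1) + b ^ p)
          + ENNReal.ofReal (1 - p) * ((((n : ℝ≥0∞) + 1) ^ p)⁻¹ * b ^ p) := by ring
    _ ≤ W * tailSum a n ^ p + ENNReal.ofReal (1 - p) * tailMean a n ^ p := by
        rw [hmean]
        gcongr
        · rw [hB]; exact ofReal_mul_mul_rpow_sub_one_add_rpow_le hp0 hp1 _ _
        · exact antitone_tailSum a n.le_succ

theorem ofReal_mul_tsum_hardyWeight_le (hp0 : 0 < p) (hp1 : p ≤ 1) :
    ENNReal.ofReal p * ∑' n, hardyWeight a p n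
      ≤ tailSum a 0 ^ p + ENNReal.ofReal (1 - p) * ∑' n, tailMean a n ^ p := by
  rw [← ENNReal.tsum_mul_left, ← ENNReal.tsum_mul_left]
  simpa using tsum_le_add_tsum_of_add_le
    (c := fun n => ((n : ℝ≥0∞) + 1) ^ (1 - p) * tailSum a n ^ p) fun n => by
      simpa [add_assoc, one_add_one_eq_two] using ofReal_mul_hardyWeight_add_le a hp0 hp1 n

theorem rpow_le_hardyWeight_rpow_mul (hp0 : 0 < p) (hp1 : p ≤ 1) (n : ℕ)
    (hn : tailSum a n ≠ ⊤) :
    a n ^ p ≤ hardyWeight a p n ^ p * (tailMean a n ^ p) ^ (1 - p) := by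
  rcases eq_or_ne (tailSum a n) 0 with h0 | h0
  · have : a n = 0 := (add_eq_zero.mp ((tailSum_eq_add_tailSum_succ a n).symm.trans h0)).1
    simp [this, zero_rpow_of_pos hp0]
  rw [hardyWeight, tailMean]
  set W : ℝ≥0∞ := (n : ℝ≥0∞) + 1
  have hW0 : W ≠ 0 := by simp [W]
  have hWtop : W ≠ ⊤ := by simp [W]
  have hWcancel : (W ^ (1 - p)) ^ p * (W⁻¹ ^ p) ^ (1 - p) = 1 := by
    rw [← rpow_mul, ← rpow_mul, inv_rpow, mul_comm (1 - p) p, ENNReal.mul_inv_cancel]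
    · exact (rpow_pos (pos_iff_ne_zero.mpr hW0) hWtop).ne'
    · exact rpow_ne_top_of_nonneg (by positivity) hWtop
  have hBcancel : (tailSum a n ^ (p - 1)) ^ p * (tailSum a n ^ p) ^ (1 - p) = 1 := by
    rw [← rpow_mul, ← rpow_mul, ← rpow_add _ _ h0 hn, show (p - 1) * p + p * (1 - p) = 0 by ring,
      rpow_zero]
  have hq : 0 ≤ 1 - p := sub_nonneg.mpr hp1
  simp only [mul_rpow_of_nonneg _ _ hp0.le, mul_rpow_of_nonneg _ _ hq]
  refine le_of_eq ?_
  calc a n ^ p = a n ^ p * ((W ^ (1 - p)) ^ p * (W⁻¹ ^ p) ^ (1 - p))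
        * ((tailSum a n ^ (p - 1)) ^ p * (tailSum a n ^ p) ^ (1 - p)) := by
        rw [hWcancel, hBcancel, mul_one, mul_one]
    _ = _ := by ring
theorem ofReal_div_one_sub_rpow_mul_tsum_rpow_le (hp0 : 0 < p) (hp1 : p < 1) :
    ENNReal.ofReal (p / (1 - p)) ^ p * ∑' n, a n ^ p
      ≤ ENNReal.ofReal (1 / (1 - p)) * tailSum a 0 ^ p + ∑' n, tailMean a n ^ p := by
  have hq : 0 < 1 - p := by linarith
  rcases eq_or_ne (tailSum a 0) ⊤ with htop | hfin
  · simp [htop, top_rpow_of_pos hp0, hq]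
  set M := ENNReal.ofReal (1 / (1 - p)) * tailSum a 0 ^ p + ∑' n, tailMean a n ^ p
  set T := ∑' n, hardyWeight a p n
  set S := ∑' n, tailMean a n ^ p
  have hT : ENNReal.ofReal (p / (1 - p)) * T ≤ M :=
    calc ENNReal.ofReal (p / (1 - p)) * T
        = ENNReal.ofReal (1 / (1 - p)) * (ENNReal.ofReal p * T) := by
          rw [← mul_assoc, ← ofReal_mul (by positivity), one_div_mul_eq_div]
      _ ≤ ENNReal.ofReal (1 / (1 - p)) * (tailSum a 0 ^ p + ENNReal.ofReal (1 - p) * S) := by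
          gcongr; exact ofReal_mul_tsum_hardyWeight_le a hp0 hp1.le
      _ = M := by
          rw [mul_add, ← mul_assoc, ← ofReal_mul (by positivity), one_div_mul_cancel hq.ne',
            ofReal_one, one_mul]
  have hHolder : ∑' n, a n ^ p ≤ T ^ p * S ^ (1 - p) :=
    (ENNReal.tsum_le_tsum fun n => rpow_le_hardyWeight_rpow_mul a hp0 hp1.le n
      (ne_top_of_le_ne_top hfin (antitone_tailSum a n.zero_le))).trans
      (tsum_rpow_mul_rpow_le hp0.le hq.le (by ring) _ _)
  calc ENNReal.ofReal (p / (1 - p)) ^ p * ∑' n, a n ^ p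
      ≤ ENNReal.ofReal (p / (1 - p)) ^ p * (T ^ p * S ^ (1 - p)) := by gcongr
    _ = (ENNReal.ofReal (p / (1 - p)) * T) ^ p * S ^ (1 - p) := by
        rw [mul_rpow_of_nonneg _ _ hp0.le, mul_assoc]
    _ ≤ M ^ p * M ^ (1 - p) := by gcongr; exact le_add_self
    _ = M := by rw [← rpow_add_of_nonneg _ _ hp0.le hq.le, add_sub_cancel, rpow_one]

end Hardy

-- `a i` stands for the paper's `a_{i+1}`; the `m`-th term of the second sum is its term `j = m + 2`.
theorem hardy_discrete_reversed_general (p : ℝ) (hp0 : 0 < p) (hp1 : p < 1)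
    (a : ℕ → ℝ) :
    ENNReal.ofReal (1 + 1 / (1 - p)) * (∑' i : ℕ, ENNReal.ofReal (a i)) ^ p
        + ∑' m : ℕ, ((((m : ℝ≥0∞) + 2))⁻¹ * ∑' i : ℕ, ENNReal.ofReal (a (i + m + 1))) ^ p
      ≥ ENNReal.ofReal (p / (1 - p)) ^ p * ∑' i : ℕ, ENNReal.ofReal (a i) ^ p := by
  set b : ℕ → ℝ≥0∞ := fun i => ENNReal.ofReal (a i)
  have hsplit : ∑' n, tailMean b n ^ p = tailSum b 0 ^ p
      + ∑' m : ℕ, ((((m : ℝ≥0∞) + 2))⁻¹ * ∑' i : ℕ, b (i + m + 1)) ^ p := by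
    rw [tsum_eq_zero_add' ENNReal.summable]
    simp [tailMean, tailSum, add_assoc, one_add_one_eq_two]
  calc ENNReal.ofReal (p / (1 - p)) ^ p * ∑' i, b i ^ p
      ≤ ENNReal.ofReal (1 / (1 - p)) * tailSum b 0 ^ p + ∑' n, tailMean b n ^ p :=
        ofReal_div_one_sub_rpow_mul_tsum_rpow_le b hp0 hp1
    _ = _ := by
        rw [hsplit, ofReal_add zero_le_one (one_div_pos.mpr (sub_pos.mpr hp1)).le,
          ofReal_one]
        simp only [tailSum, add_zero]
        ring

/-- Discrete reversed Hardy inequality for `0 < p < 1` (HLP Theorem 338).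
Here `a i` represents `a_{i+1}`, so `∑_{h=j}^∞ a_h` with `j = m + 2` is
`∑' i, a (i + m + 1)`. -/
theorem hardy_discrete_reversed (p : ℝ) (hp0 : 0 < p) (hp1 : p < 1)
    (a : ℕ → ℝ) (hpos : ∀ i, 0 ≤ a i) :
    ENNReal.ofReal (1 + 1 / (1 - p)) * (∑' i : ℕ, ENNReal.ofReal (a i)) ^ p
        + ∑' m : ℕ, ((((m : ℝ≥0∞) + 2))⁻¹ * ∑' i : ℕ, ENNReal.ofReal (a (i + m + 1))) ^ p
      ≥ ENNReal.ofReal (p / (1 - p)) ^ p * ∑' i : ℕ, ENNReal.ofReal (a i) ^ p :=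
  hardy_discrete_reversed_general p hp0 hp1 a
end

section
/- Let $X$ and $Y$ be independent random variables with common distribution function $F$, let $p\ge 1$, and let $\psi$ be a measurable function. Then $\left\{E\left(\left|E\left(\frac{\psi(Y)}{F(Y)}\mathbf{1}_{[Y\ge X]}\mid X\right)\right|^p\right)\right\}^{1/p} \le p\,\left\{E(|\psi(Y)|^p)\right\}^{1/p}$. -/
open MeasureTheory Set ENNReal ProbabilityTheory

/-!
Write `F y = μ (-∞, y]` for the common law `μ` of `X` and `Y`, `h = |ψ| / F` and
`G x = ∫_{[x, ∞)} h dμ`. For a finite measure `ν` on a line, `ν {y | ν [y, ∞) ≤ t} ≤ t`, so by the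
layer-cake formula `ν(univ)^p ≤ p ∫ ν[y, ∞)^(p-1) dν(y)`: a chain rule for the tail function,
which atoms only improve. Applied to `ν = h · μ` on `[x, ∞)` it gives
`G(x)^p ≤ p ∫_{[x, ∞)} h G^(p-1) dμ`; integrating in `x` and exchanging the integrals turns the
right side into `p ∫ G^(p-1) h F dμ ≤ p ∫ G^(p-1) |ψ| dμ ≤ p ‖G‖_p^(p-1) ‖ψ‖_p` (Hölder).
Dividing by `‖G‖_p^(p-1)` needs `‖G‖_p < ∞`, which holds once `h` is truncated at a level `n`;
monotone convergence then removes the truncation.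
-/

theorem ofReal_mul_lintegral_Ioc_rpow_sub_one {p m : ℝ} (hp : 0 < p) (hm : 0 ≤ m) :
    ENNReal.ofReal p * ∫⁻ s in Ioc 0 m, ENNReal.ofReal (s ^ (p - 1)) = ENNReal.ofReal (m ^ p) := by
  have hint : IntegrableOn (fun s : ℝ => s ^ (p - 1)) (Ioc 0 m) := by
    have := intervalIntegral.intervalIntegrable_rpow' (a := 0) (b := m) (by linarith : -1 < p - 1)
    rwa [intervalIntegrable_iff_integrableOn_Ioc_of_le hm] at this
  rw [← ofReal_integral_eq_lintegral_ofReal hint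
      (ae_restrict_of_forall_mem measurableSet_Ioc fun s hs => Real.rpow_nonneg hs.1.le _),
    ← ENNReal.ofReal_mul hp.le, ← intervalIntegral.integral_of_le hm,
    integral_rpow (Or.inl (by linarith)), sub_add_cancel, Real.zero_rpow hp.ne', sub_zero,
    mul_div_cancel₀ _ hp.ne']

section LinearOrder

variable {α : Type*} [LinearOrder α] [MeasurableSpace α]

theorem antitone_setLIntegral_Ici (μ : Measure α) (g : α → ℝ≥0∞) :
    Antitone fun x => ∫⁻ y in Ici x, g y ∂μ :=
  fun _ _ hxy => lintegral_mono_set (Ici_subset_Ici.2 hxy)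

variable [TopologicalSpace α] [OrderTopology α]

theorem measure_setOf_measure_Ici_le [SecondCountableTopology α] (ν : Measure α) (t : ℝ≥0∞) :
    ν {y | ν (Ici y) ≤ t} ≤ t := by
  set A := {y | ν (Ici y) ≤ t}
  have hA : IsUpperSet A := fun y z hyz hy => (measure_mono (Ici_subset_Ici.2 hyz)).trans hy
  by_cases hleast : ∃ b, IsLeast A b
  · obtain ⟨b, hbA, hb⟩ := hleast
    exact (measure_mono hb).trans hbA
  have hcover : A ⊆ ⋃ y ∈ A, Ioi y := fun z hz => by
    have : z ∉ lowerBounds A := fun h => hleast ⟨z, hz, h⟩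
    simp only [mem_lowerBounds, not_forall, not_le] at this
    obtain ⟨y, hyA, hyz⟩ := this
    exact mem_biUnion hyA hyz
  obtain ⟨S, hSA, hS, hSunion⟩ :=
    TopologicalSpace.isOpen_biUnion_countable A Ioi fun _ _ => isOpen_Ioi
  calc ν A ≤ ν (⋃ y ∈ S, Ioi y) := measure_mono (hSunion ▸ hcover)
    _ = ⨆ y ∈ S, ν (Ioi y) := measure_biUnion_eq_iSup hS fun a ha b hb =>
        (le_total a b).elim (fun h => ⟨a, ha, subset_rfl, Ioi_subset_Ioi h⟩)
          (fun h => ⟨b, hb, Ioi_subset_Ioi h, subset_rfl⟩)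
    _ ≤ t := iSup₂_le fun y hy => (measure_mono Ioi_subset_Ici_self).trans (hSA hy)

variable [BorelSpace α]

theorem measurable_measure_Ici (ν : Measure α) : Measurable fun y => ν (Ici y) :=
  Antitone.measurable fun _ _ hab => measure_mono (Ici_subset_Ici.2 hab)

variable [SecondCountableTopology α]

theorem measure_univ_rpow_le_lintegral_measure_Ici_rpow (ν : Measure α) [IsFiniteMeasure ν]
    {p : ℝ} (hp : 1 ≤ p) : ν univ ^ p ≤ ENNReal.ofReal p * ∫⁻ y, ν (Ici y) ^ (p - 1) ∂ν := by
  rcases hp.eq_or_lt with rfl | hp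
  · simp
  set T : α → ℝ := fun y => (ν (Ici y)).toReal
  set m := (ν univ).toReal
  have hT : ∀ y, ENNReal.ofReal (T y) = ν (Ici y) := fun y => ofReal_toReal (measure_ne_top _ _)
  have hdom : ∀ s : ℝ, 0 ≤ s → volume.restrict (Ioc 0 m) {u | s < u} ≤ ν {y | s < T y} := by
    intro s hs
    have hcompl : ν {y | s < T y}ᶜ ≤ ENNReal.ofReal s := by
      refine (measure_mono fun y (hy : ¬ s < T y) => ?_).trans (measure_setOf_measure_Ici_le ν _)
      exact (hT y).symm.trans_le (ENNReal.ofReal_le_ofReal (not_lt.1 hy))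
    calc volume.restrict (Ioc 0 m) {u | s < u} ≤ volume (Ioc s m) := by
          rw [Measure.restrict_apply' measurableSet_Ioc]
          exact measure_mono fun u hu => ⟨hu.1, hu.2.2⟩
      _ = ENNReal.ofReal m - ENNReal.ofReal s := by rw [Real.volume_Ioc, ENNReal.ofReal_sub _ hs]
      _ ≤ ν {y | s < T y} := by
          rw [tsub_le_iff_right, ofReal_toReal (measure_ne_top _ _)]
          exact (measure_univ_le_add_compl _).trans (add_le_add le_rfl hcompl)
  have hp1 : 0 < p - 1 := sub_pos.2 hp
  calc ν univ ^ p = ENNReal.ofReal p * ∫⁻ s in Ioc 0 m, ENNReal.ofReal (s ^ (p - 1)) := by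
        rw [ofReal_mul_lintegral_Ioc_rpow_sub_one (by linarith) toReal_nonneg,
          ← ENNReal.ofReal_rpow_of_nonneg toReal_nonneg (by linarith),
          ofReal_toReal (measure_ne_top _ _)]
    _ ≤ ENNReal.ofReal p * ∫⁻ y, ENNReal.ofReal (T y ^ (p - 1)) ∂ν := by
        rw [lintegral_rpow_eq_lintegral_meas_lt_mul (volume.restrict (Ioc 0 m)) (f := fun u => u)
            (ae_restrict_of_forall_mem measurableSet_Ioc fun s hs => hs.1.le) aemeasurable_id hp1,
          lintegral_rpow_eq_lintegral_meas_lt_mul _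
            (Filter.Eventually.of_forall fun _ => toReal_nonneg)
            (measurable_measure_Ici ν).ennreal_toReal.aemeasurable hp1]
        gcongr _ * (_ * ?_)
        exact setLIntegral_mono' measurableSet_Ioi fun s hs => by gcongr; exact hdom s (le_of_lt hs)
    _ = ENNReal.ofReal p * ∫⁻ y, ν (Ici y) ^ (p - 1) ∂ν := by
        refine congrArg _ (lintegral_congr fun y => ?_)
        rw [← ENNReal.ofReal_rpow_of_nonneg toReal_nonneg hp1.le, hT]

theorem rpow_setLIntegral_Ici_le (μ : Measure α) {g : α → ℝ≥0∞} (hg : Measurable g) {x : α}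
    (hx : ∫⁻ y in Ici x, g y ∂μ ≠ ∞) {p : ℝ} (hp : 1 ≤ p) :
    (∫⁻ y in Ici x, g y ∂μ) ^ p ≤
      ENNReal.ofReal p * ∫⁻ y in Ici x, g y * (∫⁻ z in Ici y, g z ∂μ) ^ (p - 1) ∂μ := by
  set ν := (μ.restrict (Ici x)).withDensity g
  have hν : ν univ = ∫⁻ y in Ici x, g y ∂μ := by
    rw [withDensity_apply _ MeasurableSet.univ, Measure.restrict_univ]
  have hνIci : ∀ y ∈ Ici x, ν (Ici y) = ∫⁻ z in Ici y, g z ∂μ := fun y hxy => by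
    rw [withDensity_apply _ measurableSet_Ici, Measure.restrict_restrict measurableSet_Ici,
      Ici_inter_Ici, sup_eq_left.2 hxy]
  have : IsFiniteMeasure ν := ⟨hν ▸ hx.lt_top⟩
  calc (∫⁻ y in Ici x, g y ∂μ) ^ p = ν univ ^ p := by rw [hν]
    _ ≤ ENNReal.ofReal p * ∫⁻ y, ν (Ici y) ^ (p - 1) ∂ν :=
      measure_univ_rpow_le_lintegral_measure_Ici_rpow ν hp
    _ = ENNReal.ofReal p * ∫⁻ y in Ici x, g y * (∫⁻ z in Ici y, g z ∂μ) ^ (p - 1) ∂μ := by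
      rw [lintegral_withDensity_eq_lintegral_mul _ hg ((measurable_measure_Ici ν).pow_const _)]
      exact congrArg _ (setLIntegral_congr_fun measurableSet_Ici fun y hy => by
        rw [Pi.mul_apply, hνIci y hy])

theorem lintegral_setLIntegral_Ici (μ : Measure α) [SFinite μ] {W : α → ℝ≥0∞}
    (hW : Measurable W) : ∫⁻ x, ∫⁻ y in Ici x, W y ∂μ ∂μ = ∫⁻ y, W y * μ (Iic y) ∂μ := by
  simp_rw [← lintegral_indicator measurableSet_Ici]
  have hmeas : Measurable (Function.uncurry fun x y => (Ici x).indicator W y) :=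
    (hW.comp measurable_snd).indicator (measurableSet_le measurable_fst measurable_snd)
  rw [lintegral_lintegral_swap hmeas.aemeasurable]
  refine lintegral_congr fun y => ?_
  rw [← lintegral_indicator_const measurableSet_Iic]
  congr with x

theorem lintegral_rpow_setLIntegral_Ici_le (μ : Measure α) [SFinite μ] {g : α → ℝ≥0∞}
    (hg : Measurable g) (hfin : ∀ x, ∫⁻ y in Ici x, g y ∂μ ≠ ∞) {p : ℝ} (hp : 1 ≤ p) :
    ∫⁻ x, (∫⁻ y in Ici x, g y ∂μ) ^ p ∂μ ≤
      ENNReal.ofReal p * ∫⁻ y, g y * (∫⁻ z in Ici y, g z ∂μ) ^ (p - 1) * μ (Iic y) ∂μ := by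
  calc ∫⁻ x, (∫⁻ y in Ici x, g y ∂μ) ^ p ∂μ
      ≤ ∫⁻ x, ENNReal.ofReal p * ∫⁻ y in Ici x, g y * (∫⁻ z in Ici y, g z ∂μ) ^ (p - 1) ∂μ ∂μ :=
        lintegral_mono fun x => rpow_setLIntegral_Ici_le μ hg (hfin x) hp
    _ = _ := by
      rw [lintegral_const_mul' _ _ ofReal_ne_top, lintegral_setLIntegral_Ici μ
        (W := fun y => g y * (∫⁻ z in Ici y, g z ∂μ) ^ (p - 1))
        (hg.mul ((antitone_setLIntegral_Ici μ g).measurable.pow_const _))]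

end LinearOrder

theorem rpow_one_div_lintegral_rpow_le_of_le_mul_lintegral {β : Type*} [MeasurableSpace β]
    {μ : Measure β} {G f : β → ℝ≥0∞} (hG : AEMeasurable G μ) (hf : AEMeasurable f μ) {p : ℝ}
    (hp : 1 ≤ p) {K : ℝ≥0∞} (hfin : ∫⁻ x, G x ^ p ∂μ ≠ ∞)
    (h : ∫⁻ x, G x ^ p ∂μ ≤ K * ∫⁻ x, G x ^ (p - 1) * f x ∂μ) :
    (∫⁻ x, G x ^ p ∂μ) ^ (1 / p) ≤ K * (∫⁻ x, f x ^ p ∂μ) ^ (1 / p) := by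
  set A := ∫⁻ x, G x ^ p ∂μ
  set B := ∫⁻ x, f x ^ p ∂μ
  have hp0 : 0 < p := by linarith
  have holder : ∫⁻ x, G x ^ (p - 1) * f x ∂μ ≤ A ^ (1 - 1 / p) * B ^ (1 / p) := by
    convert lintegral_mul_norm_pow_le (hG.pow_const p) (hf.pow_const p)
      (sub_nonneg.2 ((div_le_one hp0).2 hp)) (by positivity) (sub_add_cancel 1 (1 / p)) using 3
    rw [← ENNReal.rpow_mul, ← ENNReal.rpow_mul, mul_one_div_cancel hp0.ne', ENNReal.rpow_one,
      mul_sub, mul_one, mul_one_div_cancel hp0.ne']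
  rcases eq_or_ne A 0 with hA | hA
  · rw [hA, ENNReal.zero_rpow_of_pos (by positivity)]
    exact zero_le
  have hA' : A ^ (1 - 1 / p) ≠ 0 := by simp [ENNReal.rpow_eq_zero_iff, hA, hfin]
  refine (ENNReal.mul_le_mul_iff_right hA' (rpow_ne_top_of_nonneg ?_ hfin)).1 ?_
  · exact sub_nonneg.2 ((div_le_one hp0).2 hp)
  calc A ^ (1 - 1 / p) * A ^ (1 / p) = A := by
        rw [← ENNReal.rpow_add _ _ hA hfin, sub_add_cancel, ENNReal.rpow_one]
    _ ≤ K * (A ^ (1 - 1 / p) * B ^ (1 / p)) := h.trans (by gcongr)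
    _ = A ^ (1 - 1 / p) * (K * B ^ (1 / p)) := by ring

theorem rpow_one_div_lintegral_iSup_rpow {β : Type*} [MeasurableSpace β] {μ : Measure β}
    {F : ℕ → β → ℝ≥0∞} (hF : ∀ n, Measurable (F n)) (hmono : Monotone F) {p : ℝ} (hp : 0 < p) :
    (∫⁻ x, (⨆ n, F n x) ^ p ∂μ) ^ (1 / p) = ⨆ n, (∫⁻ x, F n x ^ p ∂μ) ^ (1 / p) := by
  have hsup : ∀ x, (⨆ n, F n x) ^ p = ⨆ n, F n x ^ p := fun x =>
    (ENNReal.orderIsoRpow p hp).map_iSup _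
  rw [lintegral_congr hsup, lintegral_iSup (fun n => (hF n).pow_const p)
    fun m n hmn x => ENNReal.rpow_le_rpow (hmono hmn x) hp.le]
  exact (ENNReal.orderIsoRpow (1 / p) (one_div_pos.2 hp)).map_iSup _

section Copson

variable {α : Type*} [LinearOrder α] [TopologicalSpace α] [OrderTopology α]
  [SecondCountableTopology α] [MeasurableSpace α] [BorelSpace α]
  (μ : Measure α) [IsFiniteMeasure μ] {f : α → ℝ≥0∞} {p : ℝ}

theorem rpow_one_div_lintegral_rpow_setLIntegral_Ici_le_of_bounded (hf : Measurable f) (hp : 1 ≤ p)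
    {g : α → ℝ≥0∞} (hg : Measurable g) {C : ℝ≥0∞} (hC : C ≠ ∞) (hgC : ∀ y, g y ≤ C)
    (hgf : ∀ y, g y * μ (Iic y) ≤ f y) :
    (∫⁻ x, (∫⁻ y in Ici x, g y ∂μ) ^ p ∂μ) ^ (1 / p) ≤
      ENNReal.ofReal p * (∫⁻ y, f y ^ p ∂μ) ^ (1 / p) := by
  set G := fun x => ∫⁻ y in Ici x, g y ∂μ
  have hGC : ∀ x, G x ≤ C * μ univ := fun x =>
    calc G x ≤ ∫⁻ y, g y ∂μ := setLIntegral_le_lintegral _ _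
      _ ≤ ∫⁻ _, C ∂μ := lintegral_mono hgC
      _ = C * μ univ := lintegral_const C
  have hCμ : C * μ univ ≠ ∞ := mul_ne_top hC (measure_ne_top _ _)
  have hfin : ∫⁻ x, G x ^ p ∂μ ≠ ∞ := by
    refine ne_top_of_le_ne_top ?_ (lintegral_mono fun x => rpow_le_rpow (hGC x) (by linarith))
    rw [lintegral_const]
    exact mul_ne_top (rpow_ne_top_of_nonneg (by linarith) hCμ) (measure_ne_top _ _)
  refine rpow_one_div_lintegral_rpow_le_of_le_mul_lintegral
    (antitone_setLIntegral_Ici μ g).measurable.aemeasurable hf.aemeasurable hp hfin ?_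
  calc ∫⁻ x, G x ^ p ∂μ ≤ ENNReal.ofReal p * ∫⁻ y, g y * G y ^ (p - 1) * μ (Iic y) ∂μ :=
        lintegral_rpow_setLIntegral_Ici_le μ hg (fun x => ne_top_of_le_ne_top hCμ (hGC x)) hp
    _ ≤ ENNReal.ofReal p * ∫⁻ y, G y ^ (p - 1) * f y ∂μ := by
        gcongr ENNReal.ofReal p * ?_
        refine lintegral_mono fun y => ?_
        calc g y * G y ^ (p - 1) * μ (Iic y) = G y ^ (p - 1) * (g y * μ (Iic y)) := by ring
          _ ≤ G y ^ (p - 1) * f y := by gcongr; exact hgf y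

theorem rpow_one_div_lintegral_rpow_setLIntegral_Ici_div_le (hf : Measurable f) (hp : 1 ≤ p) :
    (∫⁻ x, (∫⁻ y in Ici x, f y / μ (Iic y) ∂μ) ^ p ∂μ) ^ (1 / p) ≤
      ENNReal.ofReal p * (∫⁻ y, f y ^ p ∂μ) ^ (1 / p) := by
  set h := fun y => f y / μ (Iic y)
  have hh : Measurable h :=
    hf.div (Monotone.measurable fun _ _ hab => measure_mono (Iic_subset_Iic.2 hab))
  set g : ℕ → α → ℝ≥0∞ := fun n y => min (h y) n
  have hg : ∀ n, Measurable (g n) := fun n => hh.min measurable_const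
  have hgmono : Monotone g := fun m n hmn y => min_le_min le_rfl (Nat.cast_le.2 hmn)
  have hG : ∀ x, ∫⁻ y in Ici x, h y ∂μ = ⨆ n, ∫⁻ y in Ici x, g n y ∂μ := fun x => by
    rw [← lintegral_iSup hg hgmono]
    congr with y
    rw [← inf_iSup_eq, ENNReal.iSup_natCast, inf_top_eq]
  simp_rw [hG]
  rw [rpow_one_div_lintegral_iSup_rpow (fun n => (antitone_setLIntegral_Ici μ (g n)).measurable)
    (fun m n hmn x => lintegral_mono (hgmono hmn)) (by linarith)]
  refine iSup_le fun n => rpow_one_div_lintegral_rpow_setLIntegral_Ici_le_of_bounded μ hf hp (hg n)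
    (natCast_ne_top n) (fun y => min_le_right _ _) fun y => ?_
  calc g n y * μ (Iic y) ≤ h y * μ (Iic y) := by gcongr; exact min_le_left _ _
    -- also where `μ (Iic y) = 0`, as `∞ * 0 = 0` in `ℝ≥0∞`
    _ ≤ f y := by rw [mul_comm]; exact ENNReal.mul_div_le

end Copson

theorem probability_copson_general {Ω : Type*} [MeasurableSpace Ω] (P : Measure Ω)
    [IsProbabilityMeasure P] (X Y : Ω → ℝ) (hX : Measurable X) (hY : Measurable Y)
    (hid : Measure.map X P = Measure.map Y P)
    (ψ : ℝ → ℝ) (hψ : Measurable ψ) (p : ℝ) (hp : 1 ≤ p) :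
    (∫⁻ ω, (∫⁻ y in Ici (X ω),
          ENNReal.ofReal (|ψ y|) / Measure.map Y P (Iic y) ∂(Measure.map Y P)) ^ p ∂P)
        ^ (1 / p)
      ≤ ENNReal.ofReal p * (∫⁻ ω, ENNReal.ofReal (|ψ (Y ω)| ^ p) ∂P) ^ (1 / p) := by
  set μ := Measure.map Y P
  have : IsProbabilityMeasure μ := Measure.isProbabilityMeasure_map hY.aemeasurable
  have hf : Measurable fun y => ENNReal.ofReal |ψ y| := hψ.abs.ennreal_ofReal
  have hG := (antitone_setLIntegral_Ici μ fun y => ENNReal.ofReal |ψ y| / μ (Iic y)).measurable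
  calc _ = (∫⁻ x, (∫⁻ y in Ici x, ENNReal.ofReal |ψ y| / μ (Iic y) ∂μ) ^ p ∂μ) ^ (1 / p) := by
        congr 1
        exact (lintegral_map (hG.pow_const p) hX).symm.trans (by rw [hid])
    _ ≤ ENNReal.ofReal p * (∫⁻ y, ENNReal.ofReal |ψ y| ^ p ∂μ) ^ (1 / p) :=
        rpow_one_div_lintegral_rpow_setLIntegral_Ici_div_le μ hf hp
    _ = _ := by
        rw [lintegral_map (hf.pow_const p) hY]
        simp_rw [ENNReal.ofReal_rpow_of_nonneg (abs_nonneg _) (by linarith : 0 ≤ p)]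

/-- Probability theoretic Copson inequality (Theorem 3) for `p ≥ 1`:
`{E(|E(ψ(Y)/F(Y) 1_{Y≥X} | X)|^p)}^{1/p} ≤ p {E(|ψ(Y)|^p)}^{1/p}`.
The conditional expectation is written explicitly, via independence, as
`∫_{[X,∞)} |ψ(y)|/F(y) dμ(y)` with `μ` the common law and `F(y) = μ(-∞,y]`
(which dominates the absolute value of the conditional expectation). -/
theorem probability_copson {Ω : Type*} [MeasurableSpace Ω] (P : Measure Ω)
    [IsProbabilityMeasure P] (X Y : Ω → ℝ) (hX : Measurable X) (hY : Measurable Y)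
    (hindep : IndepFun X Y P) (hid : Measure.map X P = Measure.map Y P)
    (ψ : ℝ → ℝ) (hψ : Measurable ψ) (p : ℝ) (hp : 1 ≤ p) :
    (∫⁻ ω, (∫⁻ y in Ici (X ω),
          ENNReal.ofReal (|ψ y|) / Measure.map Y P (Iic y) ∂(Measure.map Y P)) ^ p ∂P)
        ^ (1 / p)
      ≤ ENNReal.ofReal p * (∫⁻ ω, ENNReal.ofReal (|ψ (Y ω)| ^ p) ∂P) ^ (1 / p) :=
  probability_copson_general P X Y hX hY hid ψ hψ p hp
end
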